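/- arXiv:1411.4357 — 7 statements merged into one kernel-verified Lean document; each statement's English description precedes it below -/
import Mathlib

section
/- Let S be a sparse embedding (CountSketch) random matrix with r rows and d columns. Then for every x ∈ ℝ^d with ‖x‖₂ = 1, E[(‖Sx‖₂² − 1)²] ≤ 2/r. In particular, for 0 < ε, δ < 1, if r ≥ 2/(ε²δ), then S satisfies the (ε, δ, 2)-JL moment property, i.e., E[(‖Sx‖₂² − 1)²] ≤ ε²·δ for every unit vector x ∈ ℝ^d. -/
open MeasureTheory Matrix

/-- The Euclidean norm of a vector in `ℝ^n`. -/
noncomputable def euclNorm {n : ℕ} (x : Fin n → ℝ) : ℝ := Real.sqrt (∑ i, (x i) ^ 2)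

/-- The probability space underlying a CountSketch (sparse embedding) matrix with `r`
rows and `d` columns: `2d` mutually independent uniform random variables, `d` of them
uniform on `{1,…,r}` (the hash values) and `d` of them uniform on `{−1,+1}` (the signs,
encoded as booleans), modeled by the uniform measure on the finite product space. -/
noncomputable def countSketchMeasure (r d : ℕ) (hr : r ≠ 0) :
    Measure ((Fin d → Fin r) × (Fin d → Bool)) :=
  haveI : NeZero r := ⟨hr⟩
  (PMF.uniformOfFintype ((Fin d → Fin r) × (Fin d → Bool))).toMeasure

/-- The sign `σ(j) ∈ {−1, +1}` encoded by a boolean. -/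
def countSketchSign (b : Bool) : ℝ := if b then 1 else -1

/-- The CountSketch (sparse embedding) matrix determined by hash values `ω.1` and
signs `ω.2`: the `(i,j)` entry is `σ(j)` if `h(j) = i` and `0` otherwise. -/
noncomputable def countSketch {r d : ℕ} (ω : (Fin d → Fin r) × (Fin d → Bool)) :
    Matrix (Fin r) (Fin d) ℝ :=
  Matrix.of fun i j => if ω.1 j = i then countSketchSign (ω.2 j) else 0

/-!
For a unit vector `x`, the diagonal of `‖Sx‖² = ∑_{j,k} [h j = h k] σ_j σ_k x_j x_k` is `‖x‖² = 1`,
so `‖Sx‖² - 1 = ∑_{j ≠ k} a_{jk} σ_j σ_k` with `a_{jk} = [h j = h k] x_j x_k`. Averaging over the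
signs, `σ_j σ_k σ_l σ_m` has mean zero unless `{l, m} = {j, k}` (flipping an index that occurs once
changes its sign), so the sign average of the square is `2 ∑_{j ≠ k} a_{jk}²`. A collision
`h j = h k` of distinct indices has probability `1/r`, hence
`E (‖Sx‖² - 1)² = (2/r) ∑_{j ≠ k} x_j² x_k² ≤ (2/r) ‖x‖⁴ = 2/r`.
-/

open Finset

lemma countSketchSign_mul_self (b : Bool) : countSketchSign b * countSketchSign b = 1 := by
  cases b <;> norm_num [countSketchSign]

lemma countSketchSign_not (b : Bool) : countSketchSign (!b) = -countSketchSign b := by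
  cases b <;> norm_num [countSketchSign]

section Signs

variable {ι : Type*} [Fintype ι] [DecidableEq ι]

lemma sum_eq_zero_of_update_not_eq_neg (f : (ι → Bool) → ℝ) (a : ι)
    (hf : ∀ σ, f (Function.update σ a (!σ a)) = -f σ) :
    ∑ σ, f σ = 0 := by
  have flip : Function.Involutive fun σ : ι → Bool => Function.update σ a (!σ a) := by
    intro σ
    simp
  have := flip.bijective.sum_comp f
  simp only [hf, sum_neg_distrib] at this
  linarith

lemma sum_countSketchSign_mul_eq_zero {a b c e : ι} (hb : b ≠ a) (hc : c ≠ a) (he : e ≠ a) :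
    ∑ σ : ι → Bool, countSketchSign (σ a) *
      (countSketchSign (σ b) * countSketchSign (σ c) * countSketchSign (σ e)) = 0 :=
  sum_eq_zero_of_update_not_eq_neg _ a fun σ => by
    simp [Function.update_of_ne, hb, hc, he, countSketchSign_not]

lemma sum_countSketchSign_prod_four_eq_zero {j k l m : ι} (hjk : j ≠ k) (hlm : l ≠ m)
    (h₁ : ¬(l = j ∧ m = k)) (h₂ : ¬(l = k ∧ m = j)) :
    ∑ σ : ι → Bool, countSketchSign (σ j) * countSketchSign (σ k) *
      (countSketchSign (σ l) * countSketchSign (σ m)) = 0 := by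
  by_cases hjl : j = l
  · subst hjl
    have hmk : m ≠ k := fun h => h₁ ⟨rfl, h⟩
    rw [← sum_countSketchSign_mul_eq_zero (b := j) (c := k) (e := j) hlm hmk.symm hlm]
    exact sum_congr rfl fun σ _ => by ring
  by_cases hjm : j = m
  · subst hjm
    have hlk : l ≠ k := fun h => h₂ ⟨h, rfl⟩
    rw [← sum_countSketchSign_mul_eq_zero (b := j) (c := k) (e := j) hjl hlk.symm hjl]
    exact sum_congr rfl fun σ _ => by ring
  rw [← sum_countSketchSign_mul_eq_zero (a := j) hjk.symm (Ne.symm hjl) (Ne.symm hjm)]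
  exact sum_congr rfl fun σ _ => by ring

lemma sum_countSketchSign_prod_four {p q : ι × ι} (hp : p.1 ≠ p.2) (hq : q.1 ≠ q.2) :
    ∑ σ : ι → Bool, countSketchSign (σ p.1) * countSketchSign (σ p.2) *
      (countSketchSign (σ q.1) * countSketchSign (σ q.2)) =
      2 ^ Fintype.card ι * ((if q = p then 1 else 0) + if q = p.swap then 1 else 0) := by
  obtain ⟨j, k⟩ := p
  obtain ⟨l, m⟩ := q
  dsimp only at hp hq ⊢
  have hsq (a b : Bool) : countSketchSign a * countSketchSign b *
      (countSketchSign a * countSketchSign b) = 1 := by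
    linear_combination (countSketchSign b * countSketchSign b) *
      countSketchSign_mul_self a + countSketchSign_mul_self b
  by_cases h₁ : l = j ∧ m = k
  · obtain ⟨rfl, rfl⟩ := h₁
    simp [hsq, hq.symm]
  by_cases h₂ : l = k ∧ m = j
  · obtain ⟨rfl, rfl⟩ := h₂
    have hsq' (a b : Bool) : countSketchSign a * countSketchSign b *
        (countSketchSign b * countSketchSign a) = 1 := by
      rw [mul_comm (countSketchSign b)]
      exact hsq a b
    simp [hsq', hq]
  simp only [Prod.mk.injEq, Prod.swap_prod_mk, h₁, h₂, if_false, add_zero, mul_zero]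
  exact sum_countSketchSign_prod_four_eq_zero hp hq h₁ h₂

lemma sum_sq_sum_mul_countSketchSign_mul_countSketchSign (A : ι × ι → ℝ)
    (hA : ∀ p : ι × ι, p.1 = p.2 → A p = 0) :
    ∑ σ : ι → Bool, (∑ p, A p * (countSketchSign (σ p.1) * countSketchSign (σ p.2))) ^ 2 =
      2 ^ Fintype.card ι * ∑ p, A p * (A p + A p.swap) := by
  have hterm (p q : ι × ι) :
      A p * A q * ∑ σ : ι → Bool, countSketchSign (σ p.1) * countSketchSign (σ p.2) *
        (countSketchSign (σ q.1) * countSketchSign (σ q.2)) =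
      2 ^ Fintype.card ι * (A p * ((if q = p then A q else 0) + if q = p.swap then A q else 0)) := by
    by_cases hp : p.1 = p.2
    · simp [hA p hp]
    by_cases hq : q.1 = q.2
    · simp [hA q hq]
    rw [sum_countSketchSign_prod_four hp hq]
    split_ifs <;> ring
  calc ∑ σ : ι → Bool, (∑ p, A p * (countSketchSign (σ p.1) * countSketchSign (σ p.2))) ^ 2
      = ∑ p, ∑ q, A p * A q * ∑ σ : ι → Bool, countSketchSign (σ p.1) * countSketchSign (σ p.2) *
          (countSketchSign (σ q.1) * countSketchSign (σ q.2)) := by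
        simp_rw [sq, sum_mul_sum, mul_sum]
        rw [sum_comm]
        refine sum_congr rfl fun p _ => ?_
        rw [sum_comm]
        exact sum_congr rfl fun q _ => sum_congr rfl fun σ _ => by ring
    _ = 2 ^ Fintype.card ι * ∑ p, A p * (A p + A p.swap) := by
        simp_rw [hterm, ← mul_sum, sum_add_distrib, sum_ite_eq']
        simp

end Signs

lemma sum_sq_sum_ite_apply_eq {ι κ : Type*} [Fintype ι] [Fintype κ] [DecidableEq κ]
    (h : ι → κ) (y : ι → ℝ) :
    ∑ i, (∑ j, if h j = i then y j else 0) ^ 2 =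
      ∑ p : ι × ι, if h p.1 = h p.2 then y p.1 * y p.2 else 0 := by
  simp_rw [sq, sum_mul_sum, Fintype.sum_prod_type]
  rw [sum_comm]
  refine sum_congr rfl fun j _ => ?_
  rw [sum_comm]
  refine sum_congr rfl fun k _ => ?_
  by_cases hjk : h j = h k
  · simp [hjk]
  · rw [if_neg hjk]
    refine sum_eq_zero fun i _ => ?_
    split_ifs with hj hk <;> simp_all

section Hashing

variable {ι α : Type*} [DecidableEq ι] [DecidableEq α]

def countSketchCoeff (x : ι → ℝ) (h : ι → α) (p : ι × ι) : ℝ :=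
  if p.1 ≠ p.2 ∧ h p.1 = h p.2 then x p.1 * x p.2 else 0

lemma countSketchCoeff_of_eq (x : ι → ℝ) (h : ι → α) {p : ι × ι} (hp : p.1 = p.2) :
    countSketchCoeff x h p = 0 := by
  simp [countSketchCoeff, hp]

lemma countSketchCoeff_swap (x : ι → ℝ) (h : ι → α) (p : ι × ι) :
    countSketchCoeff x h p.swap = countSketchCoeff x h p := by
  simp only [countSketchCoeff, Prod.fst_swap, Prod.snd_swap, ne_comm, eq_comm (a := h p.2),
    mul_comm (x p.2)]

lemma card_mul_card_filter_apply_eq_apply [Fintype ι] [Fintype α] {j k : ι} (hjk : j ≠ k) :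
    Fintype.card α * #{h : ι → α | h j = h k} = Fintype.card α ^ Fintype.card ι := by
  let k' : {i // i ≠ j} := ⟨k, hjk.symm⟩
  have hsplit : #{h : ι → α | h j = h k} = #{p : α × ({i // i ≠ j} → α) | p.1 = p.2 k'} :=
    card_equiv (Equiv.funSplitAt j α) fun h => by simp [k']
  rw [hsplit, ← Fintype.card_fun, Fintype.card_congr (Equiv.funSplitAt j α), Fintype.card_prod]
  congr 1
  rw [← Fintype.card_subtype]
  exact Fintype.card_congr
    { toFun := fun p => p.1.2, invFun := fun g => ⟨(g k', g), rfl⟩,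
      left_inv := fun p => by ext <;> simp [p.2], right_inv := fun _ => rfl }

lemma card_mul_sum_countSketchCoeff_sq [Fintype ι] [Fintype α] (x : ι → ℝ) (p : ι × ι) :
    Fintype.card α * ∑ h : ι → α, countSketchCoeff x h p ^ 2 =
      Fintype.card α ^ Fintype.card ι * if p.1 ≠ p.2 then (x p.1 * x p.2) ^ 2 else 0 := by
  by_cases hp : p.1 = p.2
  · simp [countSketchCoeff, hp]
  simp only [countSketchCoeff, hp, ne_eq, not_false_eq_true, true_and, if_true, ite_pow,
    OfNat.ofNat_ne_zero, zero_pow, sum_ite, sum_const_zero, add_zero, sum_const, nsmul_eq_mul]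
  rw [← mul_assoc, ← Nat.cast_mul, card_mul_card_filter_apply_eq_apply hp, Nat.cast_pow]

end Hashing

lemma euclNorm_countSketch_mulVec_sq_sub_one {r d : ℕ} {x : Fin d → ℝ} (hx : ∑ j, x j ^ 2 = 1)
    (h : Fin d → Fin r) (σ : Fin d → Bool) :
    euclNorm (countSketch (h, σ) *ᵥ x) ^ 2 - 1 =
      ∑ p, countSketchCoeff x h p * (countSketchSign (σ p.1) * countSketchSign (σ p.2)) := by
  set y : Fin d → ℝ := fun j => countSketchSign (σ j) * x j
  have hmulVec (i : Fin r) : (countSketch (h, σ) *ᵥ x) i = ∑ j, if h j = i then y j else 0 := by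
    simp [y, countSketch, mulVec, dotProduct, ite_mul]
  have hsplit (p : Fin d × Fin d) : (if h p.1 = h p.2 then y p.1 * y p.2 else 0) =
      (if p.1 = p.2 then y p.1 * y p.2 else 0) +
        countSketchCoeff x h p * (countSketchSign (σ p.1) * countSketchSign (σ p.2)) := by
    unfold countSketchCoeff
    by_cases hp : p.1 = p.2
    · simp [hp]
    · split_ifs <;> simp_all [y]
      ring
  have hdiag : ∑ p : Fin d × Fin d, (if p.1 = p.2 then y p.1 * y p.2 else 0) = 1 := by
    simp only [Fintype.sum_prod_type, sum_ite_eq, mem_univ, if_true, ← hx]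
    exact sum_congr rfl fun j _ => by
      linear_combination x j ^ 2 * countSketchSign_mul_self (σ j)
  rw [euclNorm, Real.sq_sqrt (by positivity)]
  simp_rw [hmulVec, sum_sq_sum_ite_apply_eq, hsplit, sum_add_distrib, hdiag]
  ring

lemma integral_countSketchMeasure {r d : ℕ} (hr : r ≠ 0)
    (F : (Fin d → Fin r) × (Fin d → Bool) → ℝ) :
    ∫ ω, F ω ∂countSketchMeasure r d hr = ((r : ℝ) ^ d * 2 ^ d)⁻¹ * ∑ h, ∑ σ, F (h, σ) := by
  have : NeZero r := ⟨hr⟩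
  simp [countSketchMeasure, PMF.integral_eq_sum, Fintype.sum_prod_type, mul_sum]

lemma integral_countSketch_sq_sub_one_sq {r d : ℕ} (hr : r ≠ 0) {x : Fin d → ℝ}
    (hx : ∑ j, x j ^ 2 = 1) :
    ∫ ω, (euclNorm (countSketch ω *ᵥ x) ^ 2 - 1) ^ 2 ∂countSketchMeasure r d hr =
      2 / r * ∑ p : Fin d × Fin d, if p.1 ≠ p.2 then (x p.1 * x p.2) ^ 2 else 0 := by
  have hr' : (r : ℝ) ≠ 0 := Nat.cast_ne_zero.mpr hr
  have hcollision (p : Fin d × Fin d) : ∑ h : Fin d → Fin r, countSketchCoeff x h p ^ 2 =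
      (r : ℝ) ^ d / r * if p.1 ≠ p.2 then (x p.1 * x p.2) ^ 2 else 0 := by
    rw [div_mul_eq_mul_div, eq_div_iff hr', mul_comm]
    simpa using card_mul_sum_countSketchCoeff_sq (α := Fin r) x p
  have hsq (a : ℝ) : a * (a + a) = 2 * a ^ 2 := by ring
  rw [integral_countSketchMeasure]
  simp_rw [euclNorm_countSketch_mulVec_sq_sub_one hx, fun h =>
    sum_sq_sum_mul_countSketchSign_mul_countSketchSign (countSketchCoeff x h) fun _ =>
      countSketchCoeff_of_eq x h,
    countSketchCoeff_swap, Fintype.card_fin, hsq, ← mul_sum]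
  rw [sum_comm]
  simp_rw [hcollision, ← mul_sum]
  field_simp

lemma integral_countSketch_sq_sub_one_sq_le {r d : ℕ} (hr : r ≠ 0) {x : Fin d → ℝ}
    (hx : euclNorm x = 1) :
    ∫ ω, (euclNorm (countSketch ω *ᵥ x) ^ 2 - 1) ^ 2 ∂countSketchMeasure r d hr ≤ 2 / (r : ℝ) := by
  have hx' : ∑ j, x j ^ 2 = 1 := Real.sqrt_eq_one.mp hx
  rw [integral_countSketch_sq_sub_one_sq hr hx']
  calc 2 / r * ∑ p : Fin d × Fin d, (if p.1 ≠ p.2 then (x p.1 * x p.2) ^ 2 else 0)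
      ≤ 2 / r * ∑ p : Fin d × Fin d, (x p.1 * x p.2) ^ 2 := by
        gcongr with p
        split_ifs
        exacts [le_rfl, sq_nonneg _]
    _ = 2 / r := by
        simp_rw [Fintype.sum_prod_type, mul_pow, ← sum_mul_sum, hx', mul_one]

/-- second moment bound for CountSketch, and the consequent
(ε, δ, 2)-JL moment property when `r ≥ 2/(ε²δ)`. -/
theorem stmt1 (r d : ℕ) (hr : r ≠ 0) :
    (∀ x : Fin d → ℝ, euclNorm x = 1 →
      ∫ ω, (euclNorm ((countSketch ω).mulVec x) ^ 2 - 1) ^ 2 ∂(countSketchMeasure r d hr)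
        ≤ 2 / (r : ℝ)) ∧
    (∀ ε δ : ℝ, 0 < ε → ε < 1 → 0 < δ → δ < 1 → (r : ℝ) ≥ 2 / (ε ^ 2 * δ) →
      ∀ x : Fin d → ℝ, euclNorm x = 1 →
        ∫ ω, (euclNorm ((countSketch ω).mulVec x) ^ 2 - 1) ^ 2 ∂(countSketchMeasure r d hr)
          ≤ ε ^ 2 * δ) := by
  refine ⟨fun x hx => integral_countSketch_sq_sub_one_sq_le hr hx,
    fun ε δ hε _ hδ _ hrεδ x hx => (integral_countSketch_sq_sub_one_sq_le hr hx).trans ?_⟩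
  have hr' : (0 : ℝ) < r := Nat.cast_pos.mpr (Nat.pos_of_ne_zero hr)
  exact (div_le_comm₀ (by positivity) hr').mp hrεδ
end

section
/- Let A be a real n×d matrix, let 𝒮 = {y ∈ ℝⁿ : y = Ax for some x ∈ ℝ^d and ‖y‖₂ = 1}, and let N ⊆ 𝒮 be a (1/2)-net for 𝒮, i.e., for every y ∈ 𝒮 there exists w ∈ N with ‖y − w‖₂ ≤ 1/2. Let S be a real k×n matrix and ε > 0 such that |⟨Sw, Sw′⟩ − ⟨w, w′⟩| ≤ ε for all w, w′ ∈ N. Then for every y ∈ 𝒮 it holds that |‖Sy‖₂² − 1| ≤ 4ε. -/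
open Matrix

/-- The standard inner product on `ℝ^n`. -/
def dotp {n : ℕ} (x y : Fin n → ℝ) : ℝ := ∑ i, x i * y i

/-!
Let `B a b = ⟪S a, S b⟫ - ⟪a, b⟫`, a symmetric bilinear form, and let `𝒮` be the unit sphere of
the column space `V` of `A`. Every `z ∈ 𝒮` splits as `z = w + α z'` with `w ∈ N`, `z' ∈ 𝒮` and
`0 ≤ α ≤ 1/2` (take `α = ‖z - w‖`). For `K = sup {|B w z| : w ∈ N, z ∈ 𝒮}` this gives
`K ≤ ε + K / 2`, so `K ≤ 2ε`; then for `L = sup {|B z z| : z ∈ 𝒮}`,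
`L ≤ ε + 2αK + α²L ≤ 3ε + L / 4`, so `L ≤ 4ε`. Both suprema are finite since `B` is bounded.
-/

open Metric RealInnerProductSpace

theorem le_div_one_sub_of_le_add_mul_sSup {X : Type*} {f : X → ℝ} {s : Set X}
    (hf : BddAbove (f '' s)) {a c : ℝ} (hc : c < 1)
    (h : ∀ x ∈ s, f x ≤ a + c * sSup (f '' s)) {x : X} (hx : x ∈ s) :
    f x ≤ a / (1 - c) := by
  have hsup : sSup (f '' s) ≤ a + c * sSup (f '' s) :=
    csSup_le ⟨f x, Set.mem_image_of_mem f hx⟩ (Set.forall_mem_image.2 h)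
  calc f x ≤ sSup (f '' s) := le_csSup hf (Set.mem_image_of_mem f hx)
    _ ≤ a / (1 - c) := by rw [le_div_iff₀ (by linarith)]; linarith

section NormedSpace

variable {E : Type*} [NormedAddCommGroup E] [NormedSpace ℝ E]

theorem Submodule.exists_eq_add_norm_sub_smul {V : Submodule ℝ E} {z w : E}
    (hz : z ∈ (V : Set E) ∩ sphere 0 1) (hw : w ∈ V) :
    ∃ z' ∈ (V : Set E) ∩ sphere 0 1, z = w + ‖z - w‖ • z' := by
  by_cases hzw : z = w
  · exact ⟨z, hz, by simp [hzw]⟩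
  have hne : z - w ≠ 0 := sub_ne_zero.2 hzw
  refine ⟨‖z - w‖⁻¹ • (z - w), ⟨V.smul_mem _ (V.sub_mem hz.1 hw), ?_⟩, ?_⟩
  · simpa using norm_smul_inv_norm (𝕜 := ℝ) hne
  · rw [smul_smul, mul_inv_cancel₀ (norm_ne_zero_iff.2 hne), one_smul, add_sub_cancel]

namespace ContinuousLinearMap

variable (B : E →L[ℝ] E →L[ℝ] ℝ) {V : Submodule ℝ E} {N : Set E} {ε : ℝ}

theorem abs_apply_le_opNorm_of_mem_sphere {a b : E} (ha : a ∈ sphere (0 : E) 1)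
    (hb : b ∈ sphere (0 : E) 1) : |B a b| ≤ ‖B‖ := by
  simpa [mem_sphere_zero_iff_norm.1 ha, mem_sphere_zero_iff_norm.1 hb] using B.le_opNorm₂ a b

theorem abs_apply_le_two_mul_of_isNet (hNV : N ⊆ (V : Set E) ∩ sphere 0 1)
    (hnet : ∀ z ∈ (V : Set E) ∩ sphere 0 1, ∃ w ∈ N, ‖z - w‖ ≤ 1 / 2)
    (hε : ∀ w ∈ N, ∀ w' ∈ N, |B w w'| ≤ ε) {w z : E} (hw : w ∈ N)
    (hz : z ∈ (V : Set E) ∩ sphere 0 1) : |B w z| ≤ 2 * ε := by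
  set f : E × E → ℝ := fun p => |B p.1 p.2|
  set s := N ×ˢ ((V : Set E) ∩ sphere 0 1)
  have hbdd : BddAbove (f '' s) := ⟨‖B‖, by
    rintro _ ⟨p, ⟨hp₁, hp₂⟩, rfl⟩
    exact B.abs_apply_le_opNorm_of_mem_sphere (hNV hp₁).2 hp₂.2⟩
  suffices ∀ p ∈ s, f p ≤ ε + 1 / 2 * sSup (f '' s) by
    have := le_div_one_sub_of_le_add_mul_sSup hbdd (by norm_num) this (Set.mk_mem_prod hw hz)
    norm_num at this ⊢
    linarith
  rintro ⟨w, z⟩ ⟨hw, hz⟩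
  obtain ⟨w', hw', hzw'⟩ := hnet z hz
  obtain ⟨z', hz', hdecomp⟩ := V.exists_eq_add_norm_sub_smul hz (hNV hw').1
  have hα := norm_nonneg (z - w')
  generalize ‖z - w'‖ = α at hα hzw' hdecomp
  subst hdecomp
  have hz'K : |B w z'| ≤ sSup (f '' s) := le_csSup hbdd ⟨(w, z'), ⟨hw, hz'⟩, rfl⟩
  calc |B w (w' + α • z')| ≤ |B w w'| + α * |B w z'| := by
        simpa [abs_mul, abs_of_nonneg hα] using abs_add_le (B w w') (α * B w z')
    _ ≤ ε + 1 / 2 * sSup (f '' s) := add_le_add (hε w hw w' hw')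
        (mul_le_mul hzw' hz'K (abs_nonneg _) (by norm_num))

theorem apply_add_smul_self (hB : ∀ a b, B a b = B b a) (w z : E) (α : ℝ) :
    B (w + α • z) (w + α • z) = B w w + 2 * α * B w z + α ^ 2 * B z z := by
  simp only [map_add, map_smul, _root_.add_apply, _root_.smul_apply, smul_eq_mul, hB z w]
  ring

theorem abs_apply_self_le_four_mul_of_isNet (hB : ∀ a b, B a b = B b a)
    (hNV : N ⊆ (V : Set E) ∩ sphere 0 1)
    (hnet : ∀ z ∈ (V : Set E) ∩ sphere 0 1, ∃ w ∈ N, ‖z - w‖ ≤ 1 / 2)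
    (hε : ∀ w ∈ N, ∀ w' ∈ N, |B w w'| ≤ ε) {z : E} (hz : z ∈ (V : Set E) ∩ sphere 0 1) :
    |B z z| ≤ 4 * ε := by
  set f : E → ℝ := fun z => |B z z|
  set s := (V : Set E) ∩ sphere 0 1
  have hbdd : BddAbove (f '' s) := ⟨‖B‖, by
    rintro _ ⟨z, hz, rfl⟩
    exact B.abs_apply_le_opNorm_of_mem_sphere hz.2 hz.2⟩
  suffices ∀ z ∈ s, f z ≤ 3 * ε + 1 / 4 * sSup (f '' s) by
    have := le_div_one_sub_of_le_add_mul_sSup hbdd (by norm_num) this hz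
    norm_num at this ⊢
    linarith
  intro z hz
  obtain ⟨w, hw, hzw⟩ := hnet z hz
  obtain ⟨z', hz', hdecomp⟩ := V.exists_eq_add_norm_sub_smul hz (hNV hw).1
  have hα := norm_nonneg (z - w)
  generalize ‖z - w‖ = α at hα hzw hdecomp
  subst hdecomp
  have hcross : |2 * α * B w z'| ≤ 2 * ε := by
    rw [abs_mul, abs_of_nonneg (by positivity : 0 ≤ 2 * α)]
    nlinarith [B.abs_apply_le_two_mul_of_isNet hNV hnet hε hw hz', abs_nonneg (B w z')]
  have hsq : |α ^ 2 * B z' z'| ≤ 1 / 4 * sSup (f '' s) := by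
    rw [abs_mul, abs_of_nonneg (sq_nonneg α)]
    exact mul_le_mul (by nlinarith) (le_csSup hbdd ⟨z', hz', rfl⟩) (abs_nonneg _)
      (by norm_num)
  calc |B (w + α • z') (w + α • z')|
      ≤ |B w w| + |2 * α * B w z'| + |α ^ 2 * B z' z'| := by
        rw [B.apply_add_smul_self hB]
        exact abs_add_three _ _ _
    _ ≤ 3 * ε + 1 / 4 * sSup (f '' s) := by linarith [hε w hw w hw]

end ContinuousLinearMap

end NormedSpace

section InnerProductSpace

variable {E F : Type*} [NormedAddCommGroup E] [InnerProductSpace ℝ E]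
  [NormedAddCommGroup F] [InnerProductSpace ℝ F]

namespace ContinuousLinearMap

noncomputable def innerDefect (T : E →L[ℝ] F) : E →L[ℝ] E →L[ℝ] ℝ :=
  (innerSL ℝ).bilinearComp T T - innerSL ℝ

@[simp]
theorem innerDefect_apply (T : E →L[ℝ] F) (a b : E) :
    T.innerDefect a b = ⟪T a, T b⟫ - ⟪a, b⟫ :=
  rfl

theorem abs_norm_sq_sub_one_le_of_isNet (T : E →L[ℝ] F) {V : Submodule ℝ E} {N : Set E}
    (hNV : N ⊆ (V : Set E) ∩ sphere 0 1)
    (hnet : ∀ z ∈ (V : Set E) ∩ sphere 0 1, ∃ w ∈ N, ‖z - w‖ ≤ 1 / 2) {ε : ℝ}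
    (hT : ∀ w ∈ N, ∀ w' ∈ N, |⟪T w, T w'⟫ - ⟪w, w'⟫| ≤ ε) {y : E}
    (hy : y ∈ (V : Set E) ∩ sphere 0 1) :
    |‖T y‖ ^ 2 - 1| ≤ 4 * ε := by
  have := T.innerDefect.abs_apply_self_le_four_mul_of_isNet
    (fun a b => by simp [real_inner_comm]) hNV hnet hT hy
  rwa [innerDefect_apply, real_inner_self_eq_norm_sq, real_inner_self_eq_norm_sq,
    mem_sphere_zero_iff_norm.1 hy.2, one_pow] at this

end ContinuousLinearMap

end InnerProductSpace

theorem Matrix.mem_range_toLpLin_iff {m n R : Type*} [Fintype n] [DecidableEq n] [CommRing R]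
    (p q : ENNReal) (A : Matrix m n R) (z : WithLp q (m → R)) :
    z ∈ LinearMap.range (toLpLin p q A) ↔ ∃ x, A *ᵥ x = z.ofLp := by
  constructor
  · rintro ⟨x, rfl⟩
    exact ⟨x.ofLp, rfl⟩
  · rintro ⟨x, hx⟩
    exact ⟨WithLp.toLp p x, by rw [toLpLin_toLp, toLin'_apply, hx, WithLp.toLp_ofLp]⟩

theorem euclNorm_ofLp {n : ℕ} (x : EuclideanSpace ℝ (Fin n)) : euclNorm x.ofLp = ‖x‖ := by
  simp [euclNorm, EuclideanSpace.norm_eq]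

theorem dotp_ofLp {n : ℕ} (x y : EuclideanSpace ℝ (Fin n)) : dotp x.ofLp y.ofLp = ⟪x, y⟫ := by
  simp [dotp, PiLp.inner_apply, mul_comm]

theorem mem_range_toLpLin_inter_sphere_iff {n d : ℕ} (A : Matrix (Fin n) (Fin d) ℝ)
    (z : EuclideanSpace ℝ (Fin n)) :
    z ∈ (LinearMap.range (toLpLin 2 2 A) : Set (EuclideanSpace ℝ (Fin n))) ∩ sphere 0 1 ↔
      (∃ x, A *ᵥ x = z.ofLp) ∧ euclNorm z.ofLp = 1 := by
  rw [Set.mem_inter_iff, SetLike.mem_coe, mem_range_toLpLin_iff, mem_sphere_zero_iff_norm,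
    euclNorm_ofLp]

theorem stmt6_general {n d k : ℕ} (A : Matrix (Fin n) (Fin d) ℝ)
    (N : Set (Fin n → ℝ))
    (hN : ∀ w ∈ N, (∃ x : Fin d → ℝ, A.mulVec x = w) ∧ euclNorm w = 1)
    (hnet : ∀ y : Fin n → ℝ, (∃ x : Fin d → ℝ, A.mulVec x = y) → euclNorm y = 1 →
      ∃ w ∈ N, euclNorm (y - w) ≤ 1 / 2)
    (S : Matrix (Fin k) (Fin n) ℝ) (ε : ℝ)
    (hS : ∀ w ∈ N, ∀ w' ∈ N, |dotp (S.mulVec w) (S.mulVec w') - dotp w w'| ≤ ε)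
    (y : Fin n → ℝ) (hy : ∃ x : Fin d → ℝ, A.mulVec x = y) (hy1 : euclNorm y = 1) :
    |euclNorm (S.mulVec y) ^ 2 - 1| ≤ 4 * ε := by
  let T : EuclideanSpace ℝ (Fin n) →L[ℝ] EuclideanSpace ℝ (Fin k) :=
    (toLpLin 2 2 S).toContinuousLinearMap
  have hT : ∀ w, (T w).ofLp = S *ᵥ w.ofLp := fun _ => rfl
  have := T.abs_norm_sq_sub_one_le_of_isNet (V := LinearMap.range (toLpLin 2 2 A))
    (N := WithLp.ofLp ⁻¹' N) (ε := ε) ?_ ?_ ?_ (y := WithLp.toLp 2 y) ?_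
  · simpa [← euclNorm_ofLp, hT] using this
  · exact fun w hw => (mem_range_toLpLin_inter_sphere_iff A w).2 (hN _ hw)
  · intro z hz
    rw [mem_range_toLpLin_inter_sphere_iff] at hz
    obtain ⟨w, hw, hzw⟩ := hnet _ hz.1 hz.2
    exact ⟨WithLp.toLp 2 w, hw, by rwa [← euclNorm_ofLp, WithLp.ofLp_sub, WithLp.ofLp_toLp]⟩
  · intro w hw w' hw'
    simpa [← dotp_ofLp, hT] using hS _ hw _ hw'
  · exact (mem_range_toLpLin_inter_sphere_iff A _).2 ⟨hy, hy1⟩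

/-- if `S` approximately preserves inner products on a `(1/2)`-net `N` of
the set `𝒮` of unit vectors of the column space of `A`, then `S` approximately
preserves the squared norm of every vector of `𝒮`. -/
theorem stmt6 {n d k : ℕ} (A : Matrix (Fin n) (Fin d) ℝ)
    (N : Set (Fin n → ℝ))
    (hN : ∀ w ∈ N, (∃ x : Fin d → ℝ, A.mulVec x = w) ∧ euclNorm w = 1)
    (hnet : ∀ y : Fin n → ℝ, (∃ x : Fin d → ℝ, A.mulVec x = y) → euclNorm y = 1 →
      ∃ w ∈ N, euclNorm (y - w) ≤ 1 / 2)
    (S : Matrix (Fin k) (Fin n) ℝ) (ε : ℝ) (hε : 0 < ε)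
    (hS : ∀ w ∈ N, ∀ w' ∈ N, |dotp (S.mulVec w) (S.mulVec w') - dotp w w'| ≤ ε)
    (y : Fin n → ℝ) (hy : ∃ x : Fin d → ℝ, A.mulVec x = y) (hy1 : euclNorm y = 1) :
    |euclNorm (S.mulVec y) ^ 2 - 1| ≤ 4 * ε :=
  stmt6_general A N hN hnet S ε hS y hy hy1
end

section
/- Let A be a real n×d matrix, b ∈ ℝⁿ, and S a real m×n matrix. Let U be a real n×c matrix with orthonormal columns whose column space equals the column space of A. Let x* ∈ ℝ^d be a minimizer of x ↦ ‖Ax − b‖₂ and let x′ ∈ ℝ^d be a minimizer of x ↦ ‖SAx − Sb‖₂. Suppose that ‖UᵀSᵀSU − I_c‖₂ ≤ 1/2 and that, for some ε > 0, ‖UᵀSᵀS(Ax* − b)‖₂ ≤ 3√ε·‖Ax* − b‖₂. Then ‖Ax′ − b‖₂² ≤ (1 + 36ε)·‖Ax* − b‖₂². -/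
/-! Write `r = A x* - b` and `r' = A x' - b`. Since `r' - r` lies in the column space of `A`, it
equals `U z`, and `r ⟂ U z` by the normal equations of `x*`; hence `‖r'‖² = ‖r‖² + ‖z‖²`. The
normal equations of the sketched problem give `Uᵀ Sᵀ S r' = 0`, so `(Uᵀ Sᵀ S U) z = -Uᵀ Sᵀ S r`,
and since `Uᵀ Sᵀ S U` is within `1/2` of the identity, `‖z‖ ≤ 2 ‖Uᵀ Sᵀ S r‖ ≤ 6 √ε ‖r‖`. -/

open Matrix

/-- The spectral norm of a real matrix: `sup_{x ≠ 0} ‖Mx‖₂ / ‖x‖₂`. -/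
noncomputable def specNorm {m n : ℕ} (M : Matrix (Fin m) (Fin n) ℝ) : ℝ :=
  sSup ((fun x : Fin n → ℝ => euclNorm (M.mulVec x) / euclNorm x) '' {x | x ≠ 0})

theorem inner_eq_zero_of_forall_norm_le_norm_add_smul {E : Type*} [NormedAddCommGroup E]
    [InnerProductSpace ℝ E] {v w : E} (h : ∀ t : ℝ, ‖w‖ ≤ ‖w + t • v‖) : inner ℝ v w = 0 := by
  have hquad : ∀ t : ℝ, 0 ≤ ‖v‖ ^ 2 * (t * t) + 2 * inner ℝ v w * t + 0 := by
    intro t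
    have := pow_le_pow_left₀ (norm_nonneg _) (h t) 2
    rw [norm_add_sq_real, inner_smul_right, norm_smul, mul_pow, Real.norm_eq_abs, sq_abs,
      real_inner_comm] at this
    linarith
  have := discrim_le_zero hquad
  rw [discrim] at this
  nlinarith [sq_nonneg (inner ℝ v w)]

lemma euclNorm_eq_norm_toLp {n : ℕ} (x : Fin n → ℝ) : euclNorm x = ‖WithLp.toLp 2 x‖ := by
  simp [EuclideanSpace.norm_eq, euclNorm]

lemma euclNorm_nonneg {n : ℕ} (x : Fin n → ℝ) : 0 ≤ euclNorm x := Real.sqrt_nonneg _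

lemma euclNorm_sq {n : ℕ} (x : Fin n → ℝ) : euclNorm x ^ 2 = x ⬝ᵥ x := by
  rw [euclNorm, Real.sq_sqrt (by positivity)]
  simp [dotProduct, sq]

lemma euclNorm_neg {n : ℕ} (x : Fin n → ℝ) : euclNorm (-x) = euclNorm x := by
  simp [euclNorm]

lemma euclNorm_le_add_euclNorm_sub {n : ℕ} (x y : Fin n → ℝ) :
    euclNorm x ≤ euclNorm y + euclNorm (x - y) := by
  simp only [euclNorm_eq_norm_toLp, WithLp.toLp_sub]
  exact norm_le_norm_add_norm_sub' _ _

open scoped Matrix.Norms.L2Operator in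
lemma euclNorm_mulVec_le_of_specNorm_le {m n : ℕ} {M : Matrix (Fin m) (Fin n) ℝ} {C : ℝ}
    (h : specNorm M ≤ C) (x : Fin n → ℝ) : euclNorm (M *ᵥ x) ≤ C * euclNorm x := by
  rcases eq_or_ne x 0 with rfl | hx
  · simp [euclNorm]
  have hx0 : 0 < euclNorm x := by
    rw [euclNorm_eq_norm_toLp]; simpa using hx
  have hbdd : BddAbove ((fun x : Fin n → ℝ => euclNorm (M *ᵥ x) / euclNorm x) '' {x | x ≠ 0}) := by
    refine ⟨‖M‖, ?_⟩
    rintro r ⟨y, hy, rfl⟩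
    rw [div_le_iff₀ (by rw [euclNorm_eq_norm_toLp]; simpa using hy), euclNorm_eq_norm_toLp,
      euclNorm_eq_norm_toLp]
    exact M.l2_opNorm_mulVec (WithLp.toLp 2 y)
  rw [← div_le_iff₀ hx0]
  exact (le_csSup hbdd ⟨x, hx, rfl⟩).trans h

lemma mul_euclNorm_le_euclNorm_mulVec_of_specNorm_sub_one_le {n : ℕ}
    {M : Matrix (Fin n) (Fin n) ℝ} {δ : ℝ} (h : specNorm (M - 1) ≤ δ) (z : Fin n → ℝ) :
    (1 - δ) * euclNorm z ≤ euclNorm (M *ᵥ z) := by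
  have hM1 := euclNorm_mulVec_le_of_specNorm_le h z
  rw [sub_mulVec, one_mulVec] at hM1
  have := euclNorm_le_add_euclNorm_sub z (M *ᵥ z)
  rw [← neg_sub, euclNorm_neg] at this
  linarith

lemma euclNorm_add_sq_of_dotProduct_eq_zero {n : ℕ} {x y : Fin n → ℝ} (h : x ⬝ᵥ y = 0) :
    euclNorm (x + y) ^ 2 = euclNorm x ^ 2 + euclNorm y ^ 2 := by
  simp only [euclNorm_sq, add_dotProduct, dotProduct_add, dotProduct_comm y x, h]
  ring

lemma euclNorm_mulVec_of_transpose_mul_self_eq_one {n c : ℕ} {U : Matrix (Fin n) (Fin c) ℝ}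
    (hU : Uᵀ * U = 1) (z : Fin c → ℝ) : euclNorm (U *ᵥ z) = euclNorm z := by
  have : euclNorm (U *ᵥ z) ^ 2 = euclNorm z ^ 2 := by
    rw [euclNorm_sq, euclNorm_sq, dotProduct_mulVec, ← mulVec_transpose, mulVec_mulVec, hU,
      one_mulVec]
  simpa [euclNorm] using this

theorem transpose_mulVec_eq_zero_of_forall_mulVec_dotProduct_eq_zero {m n R : Type*}
    [Fintype m] [Fintype n] [CommRing R] [LinearOrder R] [IsStrictOrderedRing R]
    {V : Matrix m n R} {r : m → R} (h : ∀ z, V *ᵥ z ⬝ᵥ r = 0) : Vᵀ *ᵥ r = 0 := by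
  have := h (Vᵀ *ᵥ r)
  rwa [dotProduct_comm, dotProduct_mulVec, ← mulVec_transpose, dotProduct_self_eq_zero] at this

def IsLeastSquaresSolution {n d : ℕ} (B : Matrix (Fin n) (Fin d) ℝ) (b : Fin n → ℝ)
    (x₀ : Fin d → ℝ) : Prop :=
  ∀ x, euclNorm (B *ᵥ x₀ - b) ≤ euclNorm (B *ᵥ x - b)

theorem IsLeastSquaresSolution.mulVec_dotProduct_residual_eq_zero {n d : ℕ}
    {B : Matrix (Fin n) (Fin d) ℝ} {b : Fin n → ℝ} {x₀ : Fin d → ℝ}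
    (h : IsLeastSquaresSolution B b x₀) (y : Fin d → ℝ) : B *ᵥ y ⬝ᵥ (B *ᵥ x₀ - b) = 0 := by
  have hmin : ∀ t : ℝ, ‖WithLp.toLp 2 (B *ᵥ x₀ - b)‖
      ≤ ‖WithLp.toLp 2 (B *ᵥ x₀ - b) + t • WithLp.toLp 2 (B *ᵥ y)‖ := by
    intro t
    rw [← WithLp.toLp_smul, ← WithLp.toLp_add, ← euclNorm_eq_norm_toLp, ← euclNorm_eq_norm_toLp,
      ← mulVec_smul, sub_add_eq_add_sub, ← mulVec_add]
    exact h _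
  have := inner_eq_zero_of_forall_norm_le_norm_add_smul hmin
  rwa [EuclideanSpace.inner_toLp_toLp, star_trivial, dotProduct_comm] at this

theorem IsLeastSquaresSolution.sketched_normal_equation {n d m c : ℕ}
    {A : Matrix (Fin n) (Fin d) ℝ} {b : Fin n → ℝ} {S : Matrix (Fin m) (Fin n) ℝ}
    {U : Matrix (Fin n) (Fin c) ℝ} {x' : Fin d → ℝ}
    (h : IsLeastSquaresSolution (S * A) (S *ᵥ b) x') (hU : ∀ z, ∃ x, A *ᵥ x = U *ᵥ z) :
    (Uᵀ * Sᵀ * S) *ᵥ (A *ᵥ x' - b) = 0 := by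
  rw [← transpose_mul, ← mulVec_mulVec]
  refine transpose_mulVec_eq_zero_of_forall_mulVec_dotProduct_eq_zero fun z => ?_
  obtain ⟨x, hx⟩ := hU z
  rw [← mulVec_mulVec, ← hx, mulVec_sub, mulVec_mulVec, mulVec_mulVec]
  exact h.mulVec_dotProduct_residual_eq_zero x

/-- sketched least-squares regression guarantee. -/
theorem stmt7 {n d m c : ℕ} (A : Matrix (Fin n) (Fin d) ℝ) (b : Fin n → ℝ)
    (S : Matrix (Fin m) (Fin n) ℝ) (U : Matrix (Fin n) (Fin c) ℝ)
    (hUorth : Uᵀ * U = 1)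
    (hUspan : ∀ y : Fin n → ℝ,
      (∃ x : Fin d → ℝ, A.mulVec x = y) ↔ (∃ z : Fin c → ℝ, U.mulVec z = y))
    (xstar : Fin d → ℝ)
    (hxstar : ∀ x : Fin d → ℝ, euclNorm (A.mulVec xstar - b) ≤ euclNorm (A.mulVec x - b))
    (x' : Fin d → ℝ)
    (hx' : ∀ x : Fin d → ℝ,
      euclNorm ((S * A).mulVec x' - S.mulVec b) ≤ euclNorm ((S * A).mulVec x - S.mulVec b))
    (h1 : specNorm (Uᵀ * Sᵀ * S * U - 1) ≤ 1 / 2)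
    (ε : ℝ) (hε : 0 < ε)
    (h2 : euclNorm ((Uᵀ * Sᵀ * S).mulVec (A.mulVec xstar - b))
        ≤ 3 * Real.sqrt ε * euclNorm (A.mulVec xstar - b)) :
    euclNorm (A.mulVec x' - b) ^ 2 ≤ (1 + 36 * ε) * euclNorm (A.mulVec xstar - b) ^ 2 := by
  set r := A *ᵥ xstar - b
  have hcol (z : Fin c → ℝ) : ∃ x, A *ᵥ x = U *ᵥ z := (hUspan _).2 ⟨z, rfl⟩
  obtain ⟨z, hz⟩ : ∃ z, U *ᵥ z = (A *ᵥ x' - b) - r :=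
    (hUspan _).1 ⟨x' - xstar, by simp only [r, mulVec_sub, sub_sub_sub_cancel_right]⟩
  have hMz : (Uᵀ * Sᵀ * S * U) *ᵥ z = -((Uᵀ * Sᵀ * S) *ᵥ r) := by
    rw [← mulVec_mulVec, hz, mulVec_sub,
      IsLeastSquaresSolution.sketched_normal_equation hx' hcol, zero_sub]
  have hz_le : euclNorm z ≤ 6 * √ε * euclNorm r := by
    have := mul_euclNorm_le_euclNorm_mulVec_of_specNorm_sub_one_le h1 z
    rw [hMz, euclNorm_neg] at this
    linarith
  have hr_orth : r ⬝ᵥ U *ᵥ z = 0 := by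
    obtain ⟨x, hx⟩ := hcol z
    rw [← hx, dotProduct_comm]
    exact IsLeastSquaresSolution.mulVec_dotProduct_residual_eq_zero hxstar x
  calc euclNorm (A *ᵥ x' - b) ^ 2 = euclNorm r ^ 2 + euclNorm z ^ 2 := by
        rw [← euclNorm_mulVec_of_transpose_mul_self_eq_one hUorth z,
          ← euclNorm_add_sq_of_dotProduct_eq_zero hr_orth, hz, add_sub_cancel]
    _ ≤ euclNorm r ^ 2 + (6 * √ε * euclNorm r) ^ 2 := by
        gcongr
        exact euclNorm_nonneg z
    _ = (1 + 36 * ε) * euclNorm r ^ 2 := by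
        rw [mul_pow, mul_pow, Real.sq_sqrt hε.le]; ring
end

section
/- Let A be a real n×d matrix, let U be a real d×c matrix with orthonormal columns (so Uᵀ has orthonormal rows), and let k ≤ c be a positive integer. Suppose B is a best rank-k approximation to AU in Frobenius norm, i.e., B is an n×c matrix of rank at most k such that ‖AU − B‖_F ≤ ‖AU − Z‖_F for every n×c matrix Z of rank at most k. Then B·Uᵀ is a best rank-k approximation to A among matrices with rows in the row space of Uᵀ: for every n×c matrix Z of rank at most k, ‖A − B·Uᵀ‖_F ≤ ‖A − Z·Uᵀ‖_F. -/
/-!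
Since `U` has orthonormal columns, `A - Z Uᵀ` splits into `A - A U Uᵀ`, whose rows are orthogonal
to the column space of `U`, and `(A U - Z) Uᵀ`, whose rows lie in it and which has the Frobenius
norm of `A U - Z`. Hence `‖A - Z Uᵀ‖_F² = ‖A - A U Uᵀ‖_F² + ‖A U - Z‖_F²`, and the first summand
does not depend on `Z`.
-/

open Matrix

/-- The Frobenius norm of a real matrix. -/
noncomputable def frobNorm {m n : ℕ} (M : Matrix (Fin m) (Fin n) ℝ) : ℝ :=
  Real.sqrt (∑ i, ∑ j, (M i j) ^ 2)

lemma frobNorm_nonneg {m n : ℕ} (M : Matrix (Fin m) (Fin n) ℝ) : 0 ≤ frobNorm M :=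
  Real.sqrt_nonneg _

lemma frobNorm_sq {m n : ℕ} (M : Matrix (Fin m) (Fin n) ℝ) :
    frobNorm M ^ 2 = (M * Mᵀ).trace := by
  rw [frobNorm, Real.sq_sqrt (by positivity)]
  simp [Matrix.trace, Matrix.mul_apply, pow_two]

lemma frobNorm_le_frobNorm_iff {m n p q : ℕ} (M : Matrix (Fin m) (Fin n) ℝ)
    (N : Matrix (Fin p) (Fin q) ℝ) : frobNorm M ≤ frobNorm N ↔ frobNorm M ^ 2 ≤ frobNorm N ^ 2 :=
  (pow_le_pow_iff_left₀ (frobNorm_nonneg M) (frobNorm_nonneg N) two_ne_zero).symm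

lemma sub_mul_transpose_mul_transpose {m d c R : Type*} [Fintype d] [Fintype c] [DecidableEq c]
    [CommRing R] {U : Matrix d c R} (hU : Uᵀ * U = 1) (A : Matrix m d R) (Z : Matrix m c R) :
    (A - Z * Uᵀ) * (A - Z * Uᵀ)ᵀ =
      (A - A * U * Uᵀ) * (A - A * U * Uᵀ)ᵀ + (A * U - Z) * (A * U - Z)ᵀ := by
  have cancel : ∀ X : Matrix c m R, Uᵀ * (U * X) = X := fun X => by
    rw [← Matrix.mul_assoc, hU, Matrix.one_mul]
  simp only [Matrix.sub_mul, Matrix.mul_sub, Matrix.transpose_sub, Matrix.transpose_mul,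
    Matrix.transpose_transpose, Matrix.mul_assoc, cancel]
  abel

lemma frobNorm_sub_mul_transpose_sq {m d c : ℕ} {U : Matrix (Fin d) (Fin c) ℝ}
    (hU : Uᵀ * U = 1) (A : Matrix (Fin m) (Fin d) ℝ) (Z : Matrix (Fin m) (Fin c) ℝ) :
    frobNorm (A - Z * Uᵀ) ^ 2 = frobNorm (A - A * U * Uᵀ) ^ 2 + frobNorm (A * U - Z) ^ 2 := by
  rw [frobNorm_sq, frobNorm_sq, frobNorm_sq, ← Matrix.trace_add,
    sub_mul_transpose_mul_transpose hU]

theorem stmt9_general {n d c : ℕ} (A : Matrix (Fin n) (Fin d) ℝ) (U : Matrix (Fin d) (Fin c) ℝ)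
    (hU : Uᵀ * U = 1) (k : ℕ)
    (B : Matrix (Fin n) (Fin c) ℝ)
    (hBopt : ∀ Z : Matrix (Fin n) (Fin c) ℝ, Z.rank ≤ k →
      frobNorm (A * U - B) ≤ frobNorm (A * U - Z)) :
    ∀ Z : Matrix (Fin n) (Fin c) ℝ, Z.rank ≤ k →
      frobNorm (A - B * Uᵀ) ≤ frobNorm (A - Z * Uᵀ) := by
  intro Z hZ
  have hBZ := (frobNorm_le_frobNorm_iff _ _).1 (hBopt Z hZ)
  rw [frobNorm_le_frobNorm_iff, frobNorm_sub_mul_transpose_sq hU A B,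
    frobNorm_sub_mul_transpose_sq hU A Z]
  linarith

/-- if `B` is a best rank-`k` approximation to `AU` in Frobenius norm,
then `B Uᵀ` is a best rank-`k` approximation to `A` among matrices whose rows lie in
the row space of `Uᵀ`. -/
theorem stmt9 {n d c : ℕ} (A : Matrix (Fin n) (Fin d) ℝ) (U : Matrix (Fin d) (Fin c) ℝ)
    (hU : Uᵀ * U = 1) (k : ℕ) (hk : 0 < k) (hkc : k ≤ c)
    (B : Matrix (Fin n) (Fin c) ℝ) (hBrank : B.rank ≤ k)
    (hBopt : ∀ Z : Matrix (Fin n) (Fin c) ℝ, Z.rank ≤ k →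
      frobNorm (A * U - B) ≤ frobNorm (A * U - Z)) :
    ∀ Z : Matrix (Fin n) (Fin c) ℝ, Z.rank ≤ k →
      frobNorm (A - B * Uᵀ) ≤ frobNorm (A - Z * Uᵀ) :=
  stmt9_general A U hU k B hBopt
end

section
/- (Dual Set Spectral-Frobenius Sparsification.) Let v₁, …, v_n ∈ ℝ^k with k < n and Σ_{i=1}^n vᵢvᵢᵀ = I_k, and let a₁, …, a_n ∈ ℝ^ℓ be arbitrary vectors. Let r be an integer with k < r ≤ n. Then there exist nonnegative weights s₁, …, s_n ≥ 0, at most r of which are nonzero, such that: (1) for every x ∈ ℝ^k, xᵀ(Σ_{i=1}^n sᵢ vᵢvᵢᵀ)x ≥ (1 − √(k/r))²·‖x‖₂² (i.e., the smallest eigenvalue of Σ sᵢvᵢvᵢᵀ is at least (1 − √(k/r))²), and (2) trace(Σ_{i=1}^n sᵢ aᵢaᵢᵀ) ≤ Σ_{i=1}^n ‖aᵢ‖₂². -/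
/-!
This is the Batson–Spielman–Srivastava barrier argument with only a lower barrier. Keep
`A = ∑ sᵢ vᵢ vᵢᵀ` with `C = A - ℓ • 1` positive definite and potential `tr C⁻¹ = φ`, starting
from `s = 0`, `ℓ = -k/φ`. Each step raises `ℓ` by one and adds `t vᵢvᵢᵀ` with `1/t = L(vᵢ)`, the
lower barrier index, which by Sherman–Morrison keeps the potential equal to `φ`. Because
`∑ vᵢvᵢᵀ = 1`, a Cauchy–Schwarz estimate gives `∑ L(vᵢ) > 1 - φ`, so some `i` has
`L(vᵢ) > (1 - φ) ‖aᵢ‖² / ∑ ‖aⱼ‖²`: every step spends at most `∑ ‖aⱼ‖² / (1 - φ)` of Frobenius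
weight. After `r` steps with `φ = √(k/r)` we have `ℓ = r (1 - φ)`, and rescaling by `(1 - φ)/r`
gives both bounds.
-/

open Matrix

lemma sum_add_single_smul {ι M : Type*} [Fintype ι] [DecidableEq ι] [AddCommMonoid M]
    [Module ℝ M] (s : ι → ℝ) (i : ι) (t : ℝ) (F : ι → M) :
    ∑ j, (s + Pi.single i t : ι → ℝ) j • F j = ∑ j, s j • F j + t • F i := by
  simp [add_smul, Finset.sum_add_distrib, Pi.single_apply]

lemma sum_div_mul_mul_le_sum {ι : Type*} [Fintype ι] {s c : ι → ℝ} (hc : ∀ i, 0 ≤ c i)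
    {ε r : ℝ} (hr : 0 < r) (h : ∑ i, s i * (ε * c i / ∑ j, c j) ≤ r) :
    ∑ i, ε / r * s i * c i ≤ ∑ i, c i := by
  rcases (Finset.sum_nonneg fun i _ => hc i : 0 ≤ ∑ i, c i).eq_or_lt with hN | hN
  · have hc0 := (Finset.sum_eq_zero_iff_of_nonneg fun i _ => hc i).1 hN.symm
    simp [hc0]
  · have e1 : ∑ i, s i * (ε * c i / ∑ j, c j) = ε * (∑ i, s i * c i) / ∑ j, c j := by
      rw [Finset.mul_sum, Finset.sum_div]
      exact Finset.sum_congr rfl fun i _ => by ring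
    have e2 : ∑ i, ε / r * s i * c i = ε * (∑ i, s i * c i) / r := by
      rw [Finset.mul_sum, Finset.sum_div]
      exact Finset.sum_congr rfl fun i _ => by ring
    rw [e1, div_le_iff₀ hN] at h
    rw [e2, div_le_iff₀ hr]
    linarith

namespace Matrix

variable {ι m n : Type*} [Fintype ι] [Fintype m] [Fintype n]

lemma sq_dotProduct_le (u w : ι → ℝ) : (u ⬝ᵥ w) ^ 2 ≤ (u ⬝ᵥ u) * (w ⬝ᵥ w) := by
  simpa only [dotProduct, sq] using Finset.sum_mul_sq_le_sq_mul_sq Finset.univ u w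

lemma sq_trace_mul_transpose_le (A B : Matrix m n ℝ) :
    trace (A * Bᵀ) ^ 2 ≤ trace (A * Aᵀ) * trace (B * Bᵀ) := by
  have h (X Y : Matrix m n ℝ) :
      trace (X * Yᵀ) = (fun p : m × n => X p.1 p.2) ⬝ᵥ (fun p => Y p.1 p.2) := by
    simp [trace, mul_apply, dotProduct, Fintype.sum_prod_type]
  simpa only [h] using sq_dotProduct_le _ _

lemma dotProduct_transpose_mul_self_mulVec (R : Matrix m n ℝ) (x y : n → ℝ) :
    x ⬝ᵥ (Rᵀ * R) *ᵥ y = (R *ᵥ x) ⬝ᵥ (R *ᵥ y) := by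
  rw [← mulVec_mulVec, dotProduct_mulVec, ← mulVec_transpose, transpose_transpose]

variable [DecidableEq m]

lemma sum_dotProduct_mulVec_eq_trace {v : ι → m → ℝ} (hv : ∑ i, vecMulVec (v i) (v i) = 1)
    (M : Matrix m m ℝ) : ∑ i, v i ⬝ᵥ M *ᵥ v i = trace M := by
  have h (i : ι) : v i ⬝ᵥ M *ᵥ v i = trace (M * vecMulVec (v i) (v i)) := by
    rw [mul_vecMulVec, trace_vecMulVec, dotProduct_comm]
  simp only [h, ← trace_sum, ← Matrix.mul_sum, hv, Matrix.mul_one]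

open scoped MatrixOrder in
lemma PosSemidef.exists_eq_transpose_mul_self {M : Matrix m m ℝ} (hM : M.PosSemidef) :
    ∃ R : Matrix m m ℝ, M = Rᵀ * R := by
  obtain ⟨R, rfl⟩ := CStarAlgebra.nonneg_iff_eq_star_mul_self.mp hM.nonneg
  exact ⟨R, rfl⟩

lemma PosSemidef.sq_dotProduct_mulVec_le {M : Matrix m m ℝ} (hM : M.PosSemidef) (x y : m → ℝ) :
    (x ⬝ᵥ M *ᵥ y) ^ 2 ≤ (x ⬝ᵥ M *ᵥ x) * (y ⬝ᵥ M *ᵥ y) := by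
  obtain ⟨R, rfl⟩ := hM.exists_eq_transpose_mul_self
  simpa only [dotProduct_transpose_mul_self_mulVec] using sq_dotProduct_le _ _

lemma PosSemidef.dotProduct_mulVec_le_trace_mul {M : Matrix m m ℝ} (hM : M.PosSemidef)
    (x : m → ℝ) : x ⬝ᵥ M *ᵥ x ≤ trace M * (x ⬝ᵥ x) := by
  obtain ⟨R, rfl⟩ := hM.exists_eq_transpose_mul_self
  have htrace : trace (Rᵀ * R) = ∑ i, R i ⬝ᵥ R i := by
    rw [trace_mul_comm]; simp [trace, mul_apply, dotProduct]
  rw [dotProduct_transpose_mul_self_mulVec, htrace, Finset.sum_mul]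
  refine Finset.sum_le_sum fun i _ => ?_
  simpa only [mulVec, dotProduct, sq] using sq_dotProduct_le (R i) x

lemma PosDef.trace_mul_pos [Nonempty m] {M N : Matrix m m ℝ} (hM : M.PosDef) (hN : N.PosDef) :
    0 < trace (M * N) := by
  obtain ⟨R, rfl⟩ := hM.posSemidef.exists_eq_transpose_mul_self
  have hR : R.det ≠ 0 := fun h => hM.det_pos.ne' (by simp [h])
  have hinj : Function.Injective fun x => x ᵥ* R :=
    vecMul_injective_iff_isUnit.mpr ((isUnit_iff_isUnit_det _).mpr hR.isUnit)
  rw [mul_assoc, trace_mul_comm, mul_assoc]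
  simpa [mul_assoc] using (hN.mul_mul_conjTranspose_same hinj).trace_pos

lemma PosDef.sq_dotProduct_le {C : Matrix m m ℝ} (hC : C.PosDef) (x : m → ℝ) :
    (x ⬝ᵥ x) ^ 2 ≤ (x ⬝ᵥ C *ᵥ x) * (x ⬝ᵥ C⁻¹ *ᵥ x) := by
  have hCC : C * C⁻¹ = 1 := mul_nonsing_inv C ((isUnit_iff_isUnit_det C).mp hC.isUnit)
  have := hC.posSemidef.sq_dotProduct_mulVec_le x (C⁻¹ *ᵥ x)
  rwa [mulVec_mulVec, hCC, one_mulVec, dotProduct_comm (C⁻¹ *ᵥ x)] at this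

lemma inv_add_smul_vecMulVec {B : Matrix m m ℝ} (hB : IsUnit B) (t : ℝ) (u w : m → ℝ)
    (hden : 1 + t * (w ⬝ᵥ B⁻¹ *ᵥ u) ≠ 0) :
    (B + t • vecMulVec u w)⁻¹
      = B⁻¹ - (t / (1 + t * (w ⬝ᵥ B⁻¹ *ᵥ u))) • (B⁻¹ * vecMulVec u w * B⁻¹) := by
  set p := w ⬝ᵥ B⁻¹ *ᵥ u
  set c := t / (1 + t * p)
  have hBB : B * B⁻¹ = 1 := mul_nonsing_inv B ((isUnit_iff_isUnit_det B).mp hB)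
  have hP : vecMulVec u w * B⁻¹ * vecMulVec u w = p • vecMulVec u w := by
    rw [vecMulVec_mul, vecMulVec_mul_vecMulVec, ← dotProduct_mulVec, vecMulVec_smul]
  apply inv_eq_right_inv
  calc (B + t • vecMulVec u w) * (B⁻¹ - c • (B⁻¹ * vecMulVec u w * B⁻¹))
      = 1 + (t - c - t * c * p) • (vecMulVec u w * B⁻¹) := by
        simp only [add_mul, mul_sub, Matrix.mul_smul, Matrix.smul_mul, ← Matrix.mul_assoc, hBB,
          Matrix.one_mul, hP, smul_smul]
        module
    _ = 1 := by
        rw [show t - c - t * c * p = 0 by simp only [c]; field_simp; ring, zero_smul, add_zero]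

lemma trace_inv_add_smul_vecMulVec {B : Matrix m m ℝ} (hB : IsUnit B) (t : ℝ) (u w : m → ℝ)
    (hden : 1 + t * (w ⬝ᵥ B⁻¹ *ᵥ u) ≠ 0) :
    trace (B + t • vecMulVec u w)⁻¹
      = trace B⁻¹ - t * (w ⬝ᵥ (B⁻¹ * B⁻¹) *ᵥ u) / (1 + t * (w ⬝ᵥ B⁻¹ *ᵥ u)) := by
  rw [inv_add_smul_vecMulVec hB t u w hden, trace_sub, trace_smul, trace_mul_cycle, mul_vecMulVec,
    trace_vecMulVec, dotProduct_comm ((B⁻¹ * B⁻¹) *ᵥ u), smul_eq_mul, div_mul_eq_mul_div]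

lemma PosSemidef.sq_trace_mul_le {P X : Matrix m m ℝ} (hP : P.PosSemidef) (hX : X.IsHermitian) :
    trace (X * P) ^ 2 ≤ trace (X * X * P) * trace P := by
  obtain ⟨R, rfl⟩ := hP.exists_eq_transpose_mul_self
  have hXt : Xᵀ = X := by simpa using hX.eq
  calc trace (X * (Rᵀ * R)) ^ 2 = trace (R * X * Rᵀ) ^ 2 := by
        rw [← Matrix.mul_assoc, trace_mul_cycle]
    _ ≤ trace (R * X * (R * X)ᵀ) * trace (R * Rᵀ) := sq_trace_mul_transpose_le _ _
    _ = trace (X * X * (Rᵀ * R)) * trace (Rᵀ * R) := by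
        rw [transpose_mul, hXt, trace_mul_comm R Rᵀ, trace_mul_comm (X * X), ← Matrix.mul_assoc,
          trace_mul_cycle]
        simp only [Matrix.mul_assoc]

lemma le_dotProduct_mulVec_of_posSemidef_sub {M : Matrix m m ℝ} {a : ℝ}
    (h : (M - a • 1).PosSemidef) (x : m → ℝ) : a * (x ⬝ᵥ x) ≤ x ⬝ᵥ M *ᵥ x := by
  have := h.dotProduct_mulVec_nonneg x
  simp only [star_trivial, sub_mulVec, smul_mulVec, one_mulVec, dotProduct_sub, dotProduct_smul,
    smul_eq_mul] at this
  linarith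

lemma PosDef.sub_one_of_trace_inv_lt_one {C : Matrix m m ℝ} (hC : C.PosDef)
    (htr : trace C⁻¹ < 1) : (C - 1).PosDef := by
  refine .of_dotProduct_mulVec_pos (hC.isHermitian.sub isHermitian_one) fun x hx => ?_
  have hx' : 0 < x ⬝ᵥ x := by simpa using dotProduct_star_self_pos_iff.mpr hx
  have hCx : 0 < x ⬝ᵥ C *ᵥ x := by simpa using hC.dotProduct_mulVec_pos hx
  have hCS := hC.sq_dotProduct_le x
  have hinv := hC.inv.posSemidef.dotProduct_mulVec_le_trace_mul x
  simp only [star_trivial, sub_mulVec, one_mulVec, dotProduct_sub, sub_pos]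
  nlinarith [mul_le_mul_of_nonneg_left hinv hCx.le, mul_lt_mul_of_pos_left htr (mul_pos hCx hx')]

lemma inv_sub_one_mul_inv {C : Matrix m m ℝ} (hC : IsUnit C) (hC1 : IsUnit (C - 1)) :
    (C - 1)⁻¹ * C⁻¹ = (C - 1)⁻¹ - C⁻¹ := by
  have hCC : C * C⁻¹ = 1 := mul_nonsing_inv C ((isUnit_iff_isUnit_det C).mp hC)
  have hBB : (C - 1)⁻¹ * (C - 1) = 1 := nonsing_inv_mul _ ((isUnit_iff_isUnit_det _).mp hC1)
  calc (C - 1)⁻¹ * C⁻¹ = (C - 1)⁻¹ * (C - (C - 1)) * C⁻¹ := by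
        rw [sub_sub_cancel, Matrix.mul_one]
    _ = (C - 1)⁻¹ - C⁻¹ := by
      rw [Matrix.mul_sub, Matrix.sub_mul, hBB, Matrix.one_mul, Matrix.mul_assoc, hCC,
        Matrix.mul_one]

end Matrix

namespace BSS

variable {ι m : Type*} [Fintype ι] [Fintype m] [DecidableEq m]

/-- The lower barrier index `L_A(u)` of Batson–Spielman–Srivastava, for `C = A - ℓ • 1` and
barrier step `δ_L = 1`. -/
noncomputable def lowerIndex (C : Matrix m m ℝ) (u : m → ℝ) : ℝ :=
  u ⬝ᵥ ((C - 1)⁻¹ * (C - 1)⁻¹) *ᵥ u / (trace (C - 1)⁻¹ - trace C⁻¹) - u ⬝ᵥ (C - 1)⁻¹ *ᵥ u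

lemma trace_inv_lt_trace_inv_sub_one [Nonempty m] {C : Matrix m m ℝ} (hC : C.PosDef)
    (htr : trace C⁻¹ < 1) : trace C⁻¹ < trace (C - 1)⁻¹ := by
  have hB := hC.sub_one_of_trace_inv_lt_one htr
  have := hB.inv.trace_mul_pos hC.inv
  rw [inv_sub_one_mul_inv hC.isUnit hB.isUnit, trace_sub] at this
  linarith

lemma trace_inv_sub_one_add_smul_vecMulVec [Nonempty m] {C : Matrix m m ℝ} (hC : C.PosDef)
    (htr : trace C⁻¹ < 1) {u : m → ℝ} {t : ℝ} (ht : 0 < t) (hL : lowerIndex C u = t⁻¹) :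
    trace (C - 1 + t • vecMulVec u u)⁻¹ = trace C⁻¹ := by
  have hB := hC.sub_one_of_trace_inv_lt_one htr
  have hΔ := sub_pos.2 (trace_inv_lt_trace_inv_sub_one hC htr)
  have hp : 0 ≤ u ⬝ᵥ (C - 1)⁻¹ *ᵥ u := by
    simpa using hB.inv.posSemidef.dotProduct_mulVec_nonneg u
  have hden : 0 < 1 + t * (u ⬝ᵥ (C - 1)⁻¹ *ᵥ u) := by positivity
  rw [trace_inv_add_smul_vecMulVec hB.isUnit t u u hden.ne']
  rw [lowerIndex, sub_eq_iff_eq_add, div_eq_iff hΔ.ne'] at hL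
  rw [hL]
  field_simp
  ring

lemma sum_lowerIndex {v : ι → m → ℝ} (hv : ∑ i, vecMulVec (v i) (v i) = 1)
    (C : Matrix m m ℝ) : ∑ i, lowerIndex C (v i)
      = trace ((C - 1)⁻¹ * (C - 1)⁻¹) / (trace (C - 1)⁻¹ - trace C⁻¹) - trace (C - 1)⁻¹ := by
  simp only [lowerIndex, Finset.sum_sub_distrib, ← Finset.sum_div,
    sum_dotProduct_mulVec_eq_trace hv]

lemma one_sub_trace_inv_lt_sum_lowerIndex [Nonempty m] {v : ι → m → ℝ}
    (hv : ∑ i, vecMulVec (v i) (v i) = 1) {C : Matrix m m ℝ} (hC : C.PosDef)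
    (htr : trace C⁻¹ < 1) : 1 - trace C⁻¹ < ∑ i, lowerIndex C (v i) := by
  -- With `Δ = tr ((C - 1)⁻¹ C⁻¹)` and `T = tr ((C - 1)⁻² C⁻¹)` the sum is
  -- `1 + T / Δ - tr C⁻¹ - Δ`, and Cauchy–Schwarz gives `Δ² ≤ T tr C⁻¹ < T`.
  have hB := hC.sub_one_of_trace_inv_lt_one htr
  have hres := inv_sub_one_mul_inv hC.isUnit hB.isUnit
  have hΔ : 0 < trace ((C - 1)⁻¹ * C⁻¹) := hB.inv.trace_mul_pos hC.inv
  have hCS := hC.inv.posSemidef.sq_trace_mul_le hB.inv.isHermitian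
  have hP := hC.inv.posSemidef.trace_nonneg
  have hQQ : trace ((C - 1)⁻¹ * (C - 1)⁻¹)
      = trace ((C - 1)⁻¹ * C⁻¹) + trace ((C - 1)⁻¹ * (C - 1)⁻¹ * C⁻¹) := by
    rw [Matrix.mul_assoc, hres, Matrix.mul_sub, trace_sub, trace_sub, hres, trace_sub]
    ring
  have hQ : trace (C - 1)⁻¹ = trace C⁻¹ + trace ((C - 1)⁻¹ * C⁻¹) := by
    rw [hres, trace_sub]
    ring
  have key : trace ((C - 1)⁻¹ * C⁻¹)
      < trace ((C - 1)⁻¹ * (C - 1)⁻¹ * C⁻¹) / trace ((C - 1)⁻¹ * C⁻¹) := by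
    have hT : 0 < trace ((C - 1)⁻¹ * (C - 1)⁻¹ * C⁻¹) := by
      by_contra! h
      nlinarith [mul_nonpos_of_nonpos_of_nonneg h hP]
    rw [lt_div_iff₀ hΔ]
    nlinarith [mul_lt_mul_of_pos_left htr hT]
  rw [sum_lowerIndex hv, hQQ, hQ, add_sub_cancel_left, add_div, div_self hΔ.ne']
  linarith

lemma exists_barrier_step [Nonempty m] {v : ι → m → ℝ} (hv : ∑ i, vecMulVec (v i) (v i) = 1)
    {C : Matrix m m ℝ} (hC : C.PosDef) (htr : trace C⁻¹ < 1) {c : ι → ℝ} (hc : ∀ i, 0 ≤ c i)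
    (hcsum : ∑ i, c i ≤ 1 - trace C⁻¹) :
    ∃ i t, 0 < t ∧ t * c i ≤ 1 ∧ (C - 1 + t • vecMulVec (v i) (v i)).PosDef ∧
      trace (C - 1 + t • vecMulVec (v i) (v i))⁻¹ = trace C⁻¹ := by
  obtain ⟨i, -, hi⟩ := Finset.exists_lt_of_sum_lt
    (hcsum.trans_lt (one_sub_trace_inv_lt_sum_lowerIndex hv hC htr))
  have hL : 0 < lowerIndex C (v i) := (hc i).trans_lt hi
  refine ⟨i, (lowerIndex C (v i))⁻¹, inv_pos.2 hL, ?_, ?_,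
    trace_inv_sub_one_add_smul_vecMulVec hC htr (inv_pos.2 hL) (inv_inv _).symm⟩
  · rw [inv_mul_le_iff₀ hL, mul_one]
    exact hi.le
  · exact (hC.sub_one_of_trace_inv_lt_one htr).add_posSemidef
      (by simpa using (posSemidef_vecMulVec_self_star (v i)).smul (inv_pos.2 hL).le)

lemma exists_weights_potential_eq [Nonempty m] {v : ι → m → ℝ}
    (hv : ∑ i, vecMulVec (v i) (v i) = 1) {φ : ℝ} (hφ0 : 0 < φ) (hφ1 : φ < 1) {c : ι → ℝ}
    (hc : ∀ i, 0 ≤ c i) (hcsum : ∑ i, c i ≤ 1 - φ) (τ : ℕ) :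
    ∃ s : ι → ℝ, (∀ i, 0 ≤ s i) ∧ {i | s i ≠ 0}.ncard ≤ τ ∧ ∑ i, s i * c i ≤ τ ∧
      (∑ i, s i • vecMulVec (v i) (v i) - (τ - Fintype.card m / φ) • 1).PosDef ∧
      trace (∑ i, s i • vecMulVec (v i) (v i) - (τ - Fintype.card m / φ) • 1)⁻¹ = φ := by
  induction τ with
  | zero =>
    have hk : (0 : ℝ) < Fintype.card m := by exact_mod_cast Fintype.card_pos
    have h0 : ∑ i, (0 : ι → ℝ) i • vecMulVec (v i) (v i) - ((0 : ℕ) - Fintype.card m / φ) • 1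
        = (Fintype.card m / φ : ℝ) • (1 : Matrix m m ℝ) := by simp
    refine ⟨0, fun _ => le_rfl, by simp, by simp, ?_, ?_⟩ <;> rw [h0]
    · exact PosDef.one.smul (by positivity)
    · rw [inv_eq_right_inv (B := (Fintype.card m / φ : ℝ)⁻¹ • 1)
        (by simp [smul_smul, hk.ne', hφ0.ne']), trace_smul, trace_one, smul_eq_mul]
      field_simp
  | succ τ ih =>
    classical
    obtain ⟨s, hs, hcard, hcost, hC, htr⟩ := ih
    obtain ⟨i, t, ht, htc, hC', htr'⟩ :=
      exists_barrier_step hv hC (htr.trans_lt hφ1) hc (by rw [htr]; exact hcsum)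
    have hframe : ∑ j, (s + Pi.single i t : ι → ℝ) j • vecMulVec (v j) (v j)
          - ((τ + 1 : ℕ) - Fintype.card m / φ) • 1
        = ∑ j, s j • vecMulVec (v j) (v j) - (τ - Fintype.card m / φ) • 1 - 1
          + t • vecMulVec (v i) (v i) := by
      rw [sum_add_single_smul]
      push_cast
      module
    refine ⟨s + Pi.single i t, fun j => ?_, ?_, ?_, by rwa [hframe], by rw [hframe, htr', htr]⟩
    · rcases eq_or_ne j i with rfl | hj
      · simpa using add_nonneg (hs j) ht.le
      · simpa [hj] using hs j
    · have hsupp : {j | (s + Pi.single i t : ι → ℝ) j ≠ 0} ⊆ insert i {j | s j ≠ 0} := by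
        intro j hj
        rcases eq_or_ne j i with rfl | hji
        · exact Set.mem_insert _ _
        · simp_all
      calc {j | (s + Pi.single i t : ι → ℝ) j ≠ 0}.ncard
          ≤ (insert i {j | s j ≠ 0}).ncard := Set.ncard_le_ncard hsupp (Set.toFinite _)
        _ ≤ τ + 1 := (Set.ncard_insert_le _ _).trans (by omega)
    · have := sum_add_single_smul s i t c
      simp only [smul_eq_mul] at this
      push_cast
      linarith

theorem exists_sparse_weights {v : ι → m → ℝ} (hv : ∑ i, vecMulVec (v i) (v i) = 1)
    {c : ι → ℝ} (hc : ∀ i, 0 ≤ c i) {r : ℕ} (hr : Fintype.card m < r) :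
    ∃ s : ι → ℝ, (∀ i, 0 ≤ s i) ∧ {i | s i ≠ 0}.ncard ≤ r ∧
      (∀ x : m → ℝ, (1 - √(Fintype.card m / r)) ^ 2 * (x ⬝ᵥ x)
        ≤ x ⬝ᵥ (∑ i, s i • vecMulVec (v i) (v i)) *ᵥ x) ∧
      ∑ i, s i * c i ≤ ∑ i, c i := by
  rcases isEmpty_or_nonempty m with hm | hm
  · exact ⟨0, fun _ => le_rfl, by simp, fun x => by simp [dotProduct],
      by simpa using Finset.sum_nonneg fun i _ => hc i⟩
  set k : ℝ := (Fintype.card m : ℝ)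
  set φ := √(k / r)
  have hk : 0 < k := Nat.cast_pos.2 Fintype.card_pos
  have hr0 : (0 : ℝ) < r := by exact_mod_cast (Fintype.card_pos).trans hr
  have hφ0 : 0 < φ := Real.sqrt_pos.2 (by positivity)
  have hφ1 : φ < 1 :=
    (Real.sqrt_lt' one_pos).2 (by rw [one_pow, div_lt_one hr0]; exact Nat.cast_lt.2 hr)
  have hkφ : k / φ = r * φ := by
    rw [div_eq_iff hφ0.ne', mul_assoc, ← sq, Real.sq_sqrt (by positivity)]
    field_simp
  have hN : 0 ≤ ∑ i, c i := Finset.sum_nonneg fun i _ => hc i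
  obtain ⟨s, hs, hcard, hcost, hpos, -⟩ := exists_weights_potential_eq hv hφ0 hφ1
    (c := fun i => (1 - φ) * c i / ∑ j, c j) (fun i => by have := hc i; positivity)
    (by rw [← Finset.sum_div, ← Finset.mul_sum]; exact div_le_of_le_mul₀ hN (by linarith) le_rfl)
    r
  have hsum : ∑ i, ((1 - φ) / r * s i) • vecMulVec (v i) (v i)
      = ((1 - φ) / r) • ∑ i, s i • vecMulVec (v i) (v i) := by
    simp only [Finset.smul_sum, smul_smul]
  have hφr : (1 - φ) / r * (r - k / φ) = (1 - φ) ^ 2 := by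
    rw [hkφ]
    field_simp
  refine ⟨fun i => (1 - φ) / r * s i, fun i => mul_nonneg (by bound) (hs i), ?_, fun x => ?_, ?_⟩
  · refine le_trans (Set.ncard_le_ncard (fun i hi => ?_) (Set.toFinite _)) hcard
    exact right_ne_zero_of_mul hi
  · rw [hsum, smul_mulVec, dotProduct_smul, smul_eq_mul, ← hφr, mul_assoc]
    exact mul_le_mul_of_nonneg_left
      (le_dotProduct_mulVec_of_posSemidef_sub hpos.posSemidef x) (by bound)
  · exact sum_div_mul_mul_le_sum hc hr0 hcost

end BSS

theorem stmt12_general {k l n : ℕ}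
    (v : Fin n → (Fin k → ℝ)) (a : Fin n → (Fin l → ℝ))
    (hdecomp : ∑ i, Matrix.vecMulVec (v i) (v i) = 1)
    (r : ℕ) (hkr : k < r) :
    ∃ s : Fin n → ℝ,
      (∀ i, 0 ≤ s i) ∧
      {i | s i ≠ 0}.ncard ≤ r ∧
      (∀ x : Fin k → ℝ,
        (1 - Real.sqrt ((k : ℝ) / r)) ^ 2 * euclNorm x ^ 2
          ≤ dotp x ((∑ i, s i • Matrix.vecMulVec (v i) (v i)).mulVec x)) ∧
      Matrix.trace (∑ i, s i • Matrix.vecMulVec (a i) (a i)) ≤ ∑ i, euclNorm (a i) ^ 2 := by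
  obtain ⟨s, hs, hcard, hlower, hcost⟩ := BSS.exists_sparse_weights hdecomp
    (c := fun i => euclNorm (a i) ^ 2) (fun i => sq_nonneg _) (r := r) (by simpa using hkr)
  refine ⟨s, hs, hcard, fun x => ?_, ?_⟩
  · simpa [euclNorm_sq, dotp, dotProduct] using hlower x
  · simpa [trace_sum, euclNorm_sq] using hcost

/-- Dual Set Spectral-Frobenius Sparsification. -/
theorem stmt12 {k l n : ℕ} (hkn : k < n)
    (v : Fin n → (Fin k → ℝ)) (a : Fin n → (Fin l → ℝ))
    (hdecomp : ∑ i, Matrix.vecMulVec (v i) (v i) = 1)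
    (r : ℕ) (hkr : k < r) (hrn : r ≤ n) :
    ∃ s : Fin n → ℝ,
      (∀ i, 0 ≤ s i) ∧
      {i | s i ≠ 0}.ncard ≤ r ∧
      (∀ x : Fin k → ℝ,
        (1 - Real.sqrt ((k : ℝ) / r)) ^ 2 * euclNorm x ^ 2
          ≤ dotp x ((∑ i, s i • Matrix.vecMulVec (v i) (v i)).mulVec x)) ∧
      Matrix.trace (∑ i, s i • Matrix.vecMulVec (a i) (a i)) ≤ ∑ i, euclNorm (a i) ^ 2 :=
  stmt12_general v a hdecomp r hkr
end

section
/- Let k ≥ 1, δ > 0, let M be a real symmetric k×k matrix, v ∈ ℝ^k, and L ∈ ℝ. Define φ(L, M) = trace((M − L·I_k)⁻¹) and LOW(v, δ, M, L) = [vᵀ(M − (L+δ)I_k)⁻²v] / [φ(L+δ, M) − φ(L, M)] − vᵀ(M − (L+δ)I_k)⁻¹v. Suppose M − L·I_k is positive definite (all eigenvalues of M exceed L) and φ(L, M) < 1/δ. If t > 0 satisfies 1/t ≤ LOW(v, δ, M, L), then: (1) M + t·vvᵀ − (L + δ)I_k is positive definite, i.e., the smallest eigenvalue of M + t·vvᵀ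 exceeds L + δ; and (2) φ(L + δ, M + t·vvᵀ) ≤ φ(L, M). -/
/-!
Write `A = M - (L + δ) • 1` and `B = M - L • 1`. For positive semidefinite `P` one has
`xᵀ P x ≤ trace P * xᵀ x`, so `1 - δ • B⁻¹` is positive definite when `δ * trace B⁻¹ < 1`.
Conjugating by `√B` shows that `A = √B (1 - δ • B⁻¹) √B` is positive definite, hence so is
`A + t • v vᵀ`. By Sherman–Morrison,
`trace (A + t • v vᵀ)⁻¹ = trace A⁻¹ - t vᵀA⁻²v / (1 + t vᵀA⁻¹v)`,
and the hypothesis `1 / t ≤ LOW` says exactly that the subtracted term is at least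
`trace A⁻¹ - trace B⁻¹`.
-/

open Matrix
open scoped MatrixOrder

namespace Matrix

variable {n : Type*} [Fintype n]

theorem dotProduct_mulVec_vecMulVec_self_le (u x : n → ℝ) :
    x ⬝ᵥ vecMulVec u u *ᵥ x ≤ (vecMulVec u u).trace * (x ⬝ᵥ x) := by
  have hquad : x ⬝ᵥ vecMulVec u u *ᵥ x = (u ⬝ᵥ x) ^ 2 := by
    simp only [vecMulVec_mulVec, MulOpposite.smul_eq_mul_unop, MulOpposite.unop_op,
      dotProduct_smul, dotProduct_comm x u, sq]
  rw [hquad, trace_vecMulVec]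
  simpa only [dotProduct, sq] using Finset.sum_mul_sq_le_sq_mul_sq Finset.univ u x

theorem PosSemidef.dotProduct_mulVec_le_trace_mul_s13 {P : Matrix n n ℝ} (hP : P.PosSemidef)
    (x : n → ℝ) : x ⬝ᵥ P *ᵥ x ≤ P.trace * (x ⬝ᵥ x) := by
  obtain ⟨m, u, rfl⟩ := posSemidef_iff_eq_sum_vecMulVec.mp hP
  simp only [star_trivial, sum_mulVec, dotProduct_sum, trace_sum, Finset.sum_mul]
  exact Finset.sum_le_sum fun i _ ↦ dotProduct_mulVec_vecMulVec_self_le (u i) x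

variable [DecidableEq n]

theorem PosSemidef.posDef_one_sub_of_trace_lt_one {P : Matrix n n ℝ} (hP : P.PosSemidef)
    (htr : P.trace < 1) : (1 - P).PosDef := by
  refine .of_dotProduct_mulVec_pos (isHermitian_one.sub hP.isHermitian) fun x hx ↦ ?_
  have hxx : 0 < x ⬝ᵥ x := by simpa using dotProduct_star_self_pos_iff.mpr hx
  have hle := hP.dotProduct_mulVec_le_trace_mul_s13 x
  rw [star_trivial, sub_mulVec, one_mulVec, dotProduct_sub]
  nlinarith

theorem PosDef.posDef_sub_smul_one {B : Matrix n n ℝ} (hB : B.PosDef) {δ : ℝ} (hδ : 0 ≤ δ)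
    (htr : δ * B⁻¹.trace < 1) : (B - δ • 1).PosDef := by
  set S := CFC.sqrt B
  have hSS : S * S = B := CFC.sqrt_mul_sqrt_self B hB.posSemidef.nonneg
  have hSstar : star S = S := (CFC.sqrt_nonneg B).isSelfAdjoint
  have hSunit : IsUnit S := (CFC.isUnit_sqrt_iff B hB.posSemidef.nonneg).mpr hB.isUnit
  have hconj : B - δ • 1 = star S * (1 - δ • B⁻¹) * S := by
    have hSBS : S * B⁻¹ * S = 1 := by
      have hdet := (isUnit_iff_isUnit_det S).mp hSunit
      rw [← hSS, mul_inv_rev, ← mul_assoc S, mul_nonsing_inv _ hdet, one_mul,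
        nonsing_inv_mul _ hdet]
    rw [hSstar, mul_sub, sub_mul, mul_one, hSS, Matrix.mul_smul, Matrix.smul_mul, hSBS]
  rw [hconj, IsUnit.posDef_star_left_conjugate_iff hSunit]
  exact (hB.inv.posSemidef.smul hδ).posDef_one_sub_of_trace_lt_one
    (by rwa [trace_smul, smul_eq_mul])

theorem inv_add_vecMulVec {K : Type*} [Field K] {A : Matrix n n K} (hA : IsUnit A.det)
    (u w : n → K) (h : 1 + w ⬝ᵥ A⁻¹ *ᵥ u ≠ 0) :
    (A + vecMulVec u w)⁻¹ =
      A⁻¹ - (1 + w ⬝ᵥ A⁻¹ *ᵥ u)⁻¹ • vecMulVec (A⁻¹ *ᵥ u) (w ᵥ* A⁻¹) := by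
  refine inv_eq_right_inv ?_
  set s := (1 + w ⬝ᵥ A⁻¹ *ᵥ u)⁻¹
  have hA_mul : A * vecMulVec (A⁻¹ *ᵥ u) (w ᵥ* A⁻¹) = vecMulVec u (w ᵥ* A⁻¹) := by
    rw [mul_vecMulVec, mulVec_mulVec, mul_nonsing_inv _ hA, one_mulVec]
  have hW_mul : vecMulVec u w * vecMulVec (A⁻¹ *ᵥ u) (w ᵥ* A⁻¹) =
      (w ⬝ᵥ A⁻¹ *ᵥ u) • vecMulVec u (w ᵥ* A⁻¹) := by
    rw [vecMulVec_mul_vecMulVec, vecMulVec_smul]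
  have hs : s * (1 + w ⬝ᵥ A⁻¹ *ᵥ u) = 1 := inv_mul_cancel₀ h
  rw [add_mul, mul_sub, mul_sub, mul_nonsing_inv _ hA, Matrix.mul_smul, Matrix.mul_smul, hA_mul,
    hW_mul, vecMulVec_mul, smul_smul]
  linear_combination (norm := module) -(hs • vecMulVec u (w ᵥ* A⁻¹))

theorem trace_inv_add_vecMulVec {K : Type*} [Field K] {A : Matrix n n K} (hA : IsUnit A.det)
    (u w : n → K) (h : 1 + w ⬝ᵥ A⁻¹ *ᵥ u ≠ 0) :
    (A + vecMulVec u w)⁻¹.trace =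
      A⁻¹.trace - w ⬝ᵥ (A⁻¹ * A⁻¹) *ᵥ u / (1 + w ⬝ᵥ A⁻¹ *ᵥ u) := by
  rw [inv_add_vecMulVec hA u w h, trace_sub, trace_smul, trace_vecMulVec,
    dotProduct_comm (A⁻¹ *ᵥ u), ← dotProduct_mulVec, mulVec_mulVec, smul_eq_mul, inv_mul_eq_div]

end Matrix

theorem sub_div_le_of_inv_le_div_sub {a b t c q : ℝ} (ht : 0 < t) (hc : 0 ≤ c) (hq : 0 ≤ q)
    (h : 1 / t ≤ q / (a - b) - c) : a - t * q / (1 + t * c) ≤ b := by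
  have hden : 0 < 1 + t * c := by positivity
  rcases le_or_gt (a - b) 0 with hab | hab
  · have : 0 ≤ t * q / (1 + t * c) := by positivity
    linarith
  · have hmul : (1 / t + c) * (a - b) ≤ q := by rw [← le_div_iff₀ hab]; linarith
    have hexp : (a - b) * (1 + t * c) = t * ((1 / t + c) * (a - b)) := by field_simp
    rw [sub_le_comm, le_div_iff₀ hden, hexp]
    exact mul_le_mul_of_nonneg_left hmul ht.le

theorem stmt13_general {k : ℕ} (δ : ℝ) (hδ : 0 < δ)
    (M : Matrix (Fin k) (Fin k) ℝ) (v : Fin k → ℝ) (L : ℝ)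
    (hpos : (M - L • (1 : Matrix (Fin k) (Fin k) ℝ)).PosDef)
    (hφ : Matrix.trace ((M - L • (1 : Matrix (Fin k) (Fin k) ℝ))⁻¹) < 1 / δ)
    (t : ℝ) (ht : 0 < t)
    (hlow : 1 / t ≤
      dotp v ((((M - (L + δ) • (1 : Matrix (Fin k) (Fin k) ℝ))⁻¹
            * (M - (L + δ) • (1 : Matrix (Fin k) (Fin k) ℝ))⁻¹)).mulVec v)
        / (Matrix.trace ((M - (L + δ) • (1 : Matrix (Fin k) (Fin k) ℝ))⁻¹)
            - Matrix.trace ((M - L • (1 : Matrix (Fin k) (Fin k) ℝ))⁻¹))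
        - dotp v (((M - (L + δ) • (1 : Matrix (Fin k) (Fin k) ℝ))⁻¹).mulVec v)) :
    (M + t • Matrix.vecMulVec v v - (L + δ) • (1 : Matrix (Fin k) (Fin k) ℝ)).PosDef ∧
    Matrix.trace ((M + t • Matrix.vecMulVec v v
          - (L + δ) • (1 : Matrix (Fin k) (Fin k) ℝ))⁻¹)
      ≤ Matrix.trace ((M - L • (1 : Matrix (Fin k) (Fin k) ℝ))⁻¹) := by
  set B := M - L • (1 : Matrix (Fin k) (Fin k) ℝ)
  set A := M - (L + δ) • (1 : Matrix (Fin k) (Fin k) ℝ)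
  have hA : A.PosDef := by
    have hAB : A = B - δ • 1 := by simp only [A, B, add_smul]; abel
    rw [hAB]
    exact hpos.posDef_sub_smul_one hδ.le (by rwa [lt_div_iff₀ hδ, mul_comm] at hφ)
  have hupdate : M + t • vecMulVec v v - (L + δ) • 1 = A + t • vecMulVec v v := by
    simp only [A]; abel
  have hc : 0 ≤ v ⬝ᵥ A⁻¹ *ᵥ v := by
    simpa using hA.inv.posSemidef.dotProduct_mulVec_nonneg v
  have hq : 0 ≤ v ⬝ᵥ (A⁻¹ * A⁻¹) *ᵥ v := by
    simpa [sq] using (hA.inv.posSemidef.pow 2).dotProduct_mulVec_nonneg v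
  rw [hupdate]
  refine ⟨hA.add_posSemidef ((posSemidef_vecMulVec_self_star v).smul ht.le), ?_⟩
  have hden : 1 + v ⬝ᵥ A⁻¹ *ᵥ (t • v) ≠ 0 := by
    rw [mulVec_smul, dotProduct_smul, smul_eq_mul]; positivity
  rw [← smul_vecMulVec, trace_inv_add_vecMulVec hA.det_pos.ne'.isUnit (t • v) v hden,
    mulVec_smul, mulVec_smul, dotProduct_smul, dotProduct_smul, smul_eq_mul, smul_eq_mul]
  exact sub_div_le_of_inv_le_div_sub ht hc hq hlow

/-- rank-one update lemma (Batson–Spielman–Srivastava). Here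
`φ(L, M) = trace((M − L·I)⁻¹)` and `LOW` is written out explicitly. -/
theorem stmt13 {k : ℕ} (hk : 1 ≤ k) (δ : ℝ) (hδ : 0 < δ)
    (M : Matrix (Fin k) (Fin k) ℝ) (hM : M.IsSymm) (v : Fin k → ℝ) (L : ℝ)
    (hpos : (M - L • (1 : Matrix (Fin k) (Fin k) ℝ)).PosDef)
    (hφ : Matrix.trace ((M - L • (1 : Matrix (Fin k) (Fin k) ℝ))⁻¹) < 1 / δ)
    (t : ℝ) (ht : 0 < t)
    (hlow : 1 / t ≤
      dotp v ((((M - (L + δ) • (1 : Matrix (Fin k) (Fin k) ℝ))⁻¹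
            * (M - (L + δ) • (1 : Matrix (Fin k) (Fin k) ℝ))⁻¹)).mulVec v)
        / (Matrix.trace ((M - (L + δ) • (1 : Matrix (Fin k) (Fin k) ℝ))⁻¹)
            - Matrix.trace ((M - L • (1 : Matrix (Fin k) (Fin k) ℝ))⁻¹))
        - dotp v (((M - (L + δ) • (1 : Matrix (Fin k) (Fin k) ℝ))⁻¹).mulVec v)) :
    (M + t • Matrix.vecMulVec v v - (L + δ) • (1 : Matrix (Fin k) (Fin k) ℝ)).PosDef ∧
    Matrix.trace ((M + t • Matrix.vecMulVec v v
          - (L + δ) • (1 : Matrix (Fin k) (Fin k) ℝ))⁻¹)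
      ≤ Matrix.trace ((M - L • (1 : Matrix (Fin k) (Fin k) ℝ))⁻¹) :=
  stmt13_general δ hδ M v L hpos hφ t ht hlow
end

section
/- There exists an absolute constant c > 0 with the following property. Let d ≥ 1, let y₁, …, y_d ≥ 0 be nonnegative real numbers, and let U₁, …, U_d be independent random variables each having the standard exponential distribution. Let X = (Σ_{i=1}^d yᵢ²/Uᵢ²)^{1/2}. Then for every r > 0, the probability that X > r·Σ_{i=1}^d yᵢ is at most c/r. -/
open MeasureTheory

/-- The product measure on `ℝ^d` of `d` i.i.d. standard exponential random variables. -/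
noncomputable def expPiMeasure (d : ℕ) : Measure (Fin d → ℝ) :=
  haveI : IsProbabilityMeasure (ProbabilityTheory.expMeasure 1) :=
    ProbabilityTheory.isProbabilityMeasure_expMeasure one_pos
  Measure.pi fun _ : Fin d => ProbabilityTheory.expMeasure 1

/-! With `aᵢ = yᵢ / (r Σ y)` the event is `{Σ (aᵢ/Uᵢ)² > 1}`, whose probability is at most
`Σ E[min 1 (aᵢ/Uᵢ)²]` (a union bound for the truncated summands). The exponential density is at
most `1` on `[0, ∞)`, so each term is at most `∫₀^∞ min 1 (a/x)² dx = a + a`, and `Σ 2aᵢ = 2/r`. -/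

open Set ProbabilityTheory
open scoped ENNReal

theorem ENNReal.min_one_add_le (x y : ℝ≥0∞) : min 1 (x + y) ≤ min 1 x + min 1 y := by
  rcases le_total 1 x with hx | hx
  · exact (min_le_left _ _).trans (by simp [hx])
  rcases le_total 1 y with hy | hy
  · exact (min_le_left _ _).trans (by simp [hy])
  · simp [hx, hy]

theorem measure_one_le_sum_le_sum_lintegral_min_one {Ω ι : Type*} [MeasurableSpace Ω]
    (μ : Measure Ω) (s : Finset ι) {f : ι → Ω → ℝ≥0∞} (hf : ∀ i ∈ s, AEMeasurable (f i) μ) :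
    μ {ω | 1 ≤ ∑ i ∈ s, f i ω} ≤ ∑ i ∈ s, ∫⁻ ω, min 1 (f i ω) ∂μ := by
  have hmin : ∀ i ∈ s, AEMeasurable (fun ω => min 1 (f i ω)) μ := fun i hi =>
    aemeasurable_const.min (hf i hi)
  calc μ {ω | 1 ≤ ∑ i ∈ s, f i ω}
      = 1 * μ {ω | 1 ≤ min 1 (∑ i ∈ s, f i ω)} := by simp
    _ ≤ ∫⁻ ω, min 1 (∑ i ∈ s, f i ω) ∂μ :=
      mul_meas_ge_le_lintegral₀ (aemeasurable_const.min (Finset.aemeasurable_fun_sum s hf)) 1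
    _ ≤ ∫⁻ ω, ∑ i ∈ s, min 1 (f i ω) ∂μ := lintegral_mono fun ω =>
      Finset.le_sum_of_subadditive (min 1) (by simp) ENNReal.min_one_add_le s (f · ω)
    _ = ∑ i ∈ s, ∫⁻ ω, min 1 (f i ω) ∂μ := lintegral_finsetSum' s hmin

theorem expMeasure_le_smul_volume_restrict {r : ℝ} (hr : 0 ≤ r) :
    expMeasure r ≤ ENNReal.ofReal r • volume.restrict (Ici 0) := by
  rw [← withDensity_const, ← withDensity_indicator measurableSet_Ici]
  refine withDensity_mono (ae_of_all _ fun x => ?_)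
  change exponentialPDF r x ≤ _
  rcases lt_or_ge x 0 with hx | hx
  · simp [exponentialPDF_of_neg hx]
  · rw [indicator_of_mem (mem_Ici.mpr hx), exponentialPDF_of_nonneg hx]
    refine ENNReal.ofReal_le_ofReal (mul_le_of_le_one_right hr ?_)
    exact Real.exp_le_one_iff.mpr (by nlinarith)

theorem lintegral_Ioi_sq_div_sq {a : ℝ} (ha : 0 ≤ a) :
    ∫⁻ x in Ioi a, ENNReal.ofReal ((a / x) ^ 2) = ENNReal.ofReal a := by
  rcases ha.eq_or_lt with rfl | ha
  · simp
  have hpow : ∀ x ∈ Ioi a, a ^ 2 * x ^ (-2 : ℝ) = (a / x) ^ 2 := fun x hx => by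
    rw [Real.rpow_neg (ha.trans hx).le, div_pow, Real.rpow_two, div_eq_mul_inv]
  have hint : IntegrableOn (fun x : ℝ => a ^ 2 * x ^ (-2 : ℝ)) (Ioi a) :=
    (integrableOn_Ioi_rpow_of_lt (by norm_num) ha).const_mul _
  rw [← setLIntegral_congr_fun measurableSet_Ioi fun x hx => by rw [← hpow x hx],
    ← ofReal_integral_eq_lintegral_ofReal hint <| by
      filter_upwards [ae_restrict_mem measurableSet_Ioi] with x hx
      have := ha.trans hx
      positivity,
    integral_const_mul, integral_Ioi_rpow_of_lt (by norm_num) ha,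
    show (-2 : ℝ) + 1 = -1 by norm_num, Real.rpow_neg_one]
  congr 1
  field_simp

theorem lintegral_Ici_min_one_sq_div_sq_le {a : ℝ} (ha : 0 ≤ a) :
    ∫⁻ x in Ici 0, min 1 (ENNReal.ofReal ((a / x) ^ 2)) ≤ ENNReal.ofReal (2 * a) := by
  calc ∫⁻ x in Ici 0, min 1 (ENNReal.ofReal ((a / x) ^ 2))
      = ∫⁻ x in Icc 0 a ∪ Ioi a, min 1 (ENNReal.ofReal ((a / x) ^ 2)) := by
        rw [Icc_union_Ioi_eq_Ici ha]
    _ ≤ (∫⁻ x in Icc 0 a, 1) + ∫⁻ x in Ioi a, ENNReal.ofReal ((a / x) ^ 2) :=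
        (lintegral_union_le _ _ _).trans
          (add_le_add (lintegral_mono fun _ => min_le_left _ _)
            (lintegral_mono fun _ => min_le_right _ _))
    _ = ENNReal.ofReal (2 * a) := by
        rw [setLIntegral_one, Real.volume_Icc, lintegral_Ioi_sq_div_sq ha, sub_zero,
          ← ENNReal.ofReal_add ha ha, two_mul]

theorem lintegral_min_one_sq_div_sq_expMeasure_le {r a : ℝ} (hr : 0 ≤ r) (ha : 0 ≤ a) :
    ∫⁻ x, min 1 (ENNReal.ofReal ((a / x) ^ 2)) ∂expMeasure r ≤ ENNReal.ofReal (2 * r * a) :=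
  calc ∫⁻ x, min 1 (ENNReal.ofReal ((a / x) ^ 2)) ∂expMeasure r
      ≤ ∫⁻ x, min 1 (ENNReal.ofReal ((a / x) ^ 2)) ∂(ENNReal.ofReal r • volume.restrict (Ici 0)) :=
        lintegral_mono' (expMeasure_le_smul_volume_restrict hr) le_rfl
    _ ≤ ENNReal.ofReal r * ENNReal.ofReal (2 * a) := by
        rw [lintegral_smul_measure, smul_eq_mul]
        gcongr
        exact lintegral_Ici_min_one_sq_div_sq_le ha
    _ = ENNReal.ofReal (2 * r * a) := by
        rw [← ENNReal.ofReal_mul hr]; ring_nf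

theorem measurePreserving_eval_expPiMeasure (d : ℕ) (i : Fin d) :
    MeasurePreserving (fun u => u i) (expPiMeasure d) (expMeasure 1) :=
  haveI := isProbabilityMeasure_expMeasure one_pos
  measurePreserving_eval _ i

theorem one_le_sum_ofReal_div_sq_of_lt_sqrt {ι : Type*} (s : Finset ι) (w : ι → ℝ) {t : ℝ}
    (ht : 0 < t) (h : t < √(∑ i ∈ s, w i ^ 2)) : 1 ≤ ∑ i ∈ s, ENNReal.ofReal ((w i / t) ^ 2) := by
  rw [← ENNReal.ofReal_sum_of_nonneg fun i _ => sq_nonneg _, ← ENNReal.ofReal_one]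
  refine ENNReal.ofReal_le_ofReal ?_
  simp_rw [div_pow, ← Finset.sum_div]
  rw [one_le_div (by positivity)]
  exact ((Real.lt_sqrt ht.le).mp h).le

/-- tail bound for `(Σᵢ yᵢ²/Uᵢ²)^{1/2}` with `Uᵢ` i.i.d. standard
exponential random variables. -/
theorem stmt17 :
    ∃ c : ℝ, 0 < c ∧
      ∀ (d : ℕ), 1 ≤ d → ∀ y : Fin d → ℝ, (∀ i, 0 ≤ y i) →
      ∀ r : ℝ, 0 < r →
        expPiMeasure d
            {u | Real.sqrt (∑ i, (y i) ^ 2 / (u i) ^ 2) > r * ∑ i, y i}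
          ≤ ENNReal.ofReal (c / r) := by
  refine ⟨2, two_pos, fun d _ y hy r hr => ?_⟩
  obtain hS | hS := (Finset.sum_nonneg fun i _ => hy i).eq_or_lt
  · have hy0 : y = 0 := funext fun i =>
      (Finset.sum_eq_zero_iff_of_nonneg fun i _ => hy i).mp hS.symm i (Finset.mem_univ i)
    simp [hy0]
  set t := r * ∑ i, y i
  have ht : 0 < t := mul_pos hr hS
  have hsub : {u : Fin d → ℝ | √(∑ i, y i ^ 2 / u i ^ 2) > t} ⊆
      {u | 1 ≤ ∑ i, ENNReal.ofReal ((y i / t / u i) ^ 2)} := fun u hu => by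
    simp only [div_right_comm _ t, ← div_pow] at hu ⊢
    exact one_le_sum_ofReal_div_sq_of_lt_sqrt _ _ ht hu
  calc expPiMeasure d {u | √(∑ i, y i ^ 2 / u i ^ 2) > t}
      ≤ ∑ i, ∫⁻ u, min 1 (ENNReal.ofReal ((y i / t / u i) ^ 2)) ∂expPiMeasure d :=
        (measure_mono hsub).trans <|
          measure_one_le_sum_le_sum_lintegral_min_one _ _ fun i _ =>
            Measurable.aemeasurable (by fun_prop)
    _ = ∑ i, ∫⁻ x, min 1 (ENNReal.ofReal ((y i / t / x) ^ 2)) ∂expMeasure 1 :=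
        Finset.sum_congr rfl fun i _ =>
          (measurePreserving_eval_expPiMeasure d i).lintegral_comp
            (f := fun x => min 1 (ENNReal.ofReal ((y i / t / x) ^ 2))) (by fun_prop)
    _ ≤ ∑ i, ENNReal.ofReal (2 * 1 * (y i / t)) := Finset.sum_le_sum fun i _ =>
        lintegral_min_one_sq_div_sq_expMeasure_le zero_le_one (div_nonneg (hy i) ht.le)
    _ = ENNReal.ofReal (2 / r) := by
        rw [← ENNReal.ofReal_sum_of_nonneg fun i _ =>
            mul_nonneg (by norm_num) (div_nonneg (hy i) ht.le),
          ← Finset.mul_sum, ← Finset.sum_div]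
        congr 1
        field_simp
        exact mul_comm _ _
end
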